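/- arXiv:2201.06634 — 7 statements merged into one kernel-verified Lean document; each statement's English description precedes it below -/
import Mathlib

section
/- Let H be an ℵ₁-free abelian group of cardinality ℵ₁ and let {H_α : α < ω₁} be an ℵ₁-filtration of H. Then H is a free abelian group if and only if there exists a club C in ω₁ such that for every α ∈ C the quotient group H/H_α is ℵ₁-free. -/
/-!
If `H` is free, index a basis by the countable ordinals: the spans of its initial segments form a
second ℵ₁-filtration, and two ℵ₁-filtrations agree on a club (by a closing-off argument of
length ω). At such an `α` the quotient `H/H_α` is isomorphic to the span of the remaining basis
vectors, a subgroup of `H`, hence ℵ₁-free.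

Conversely, along the club `C` each `H_c` is generated modulo `⋃_{d ∈ C, d < c} H_d` by lifts of a
basis of a countable subgroup of an ℵ₁-free group: of `H/H_σ` if `c` has a predecessor `σ` in `C`,
of `H` if `c = min C`, and nothing is needed at limit points of `C`, where the filtration is
continuous. Transfinite induction shows that the union of all these lifts is a basis of `H`.
-/

/-- An abelian group is ℵ₁-free if every countable subgroup is free (as a ℤ-module). -/
def Aleph1Free (H : Type*) [AddCommGroup H] : Prop :=
  ∀ K : AddSubgroup H, Countable K → Module.Free ℤ K

/-- The first uncountable ordinal ω₁. -/
noncomputable def omega1 : Ordinal := (Cardinal.aleph 1).ord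

/-- `C` is a club in `o`: a subset of `o` closed under suprema of its bounded
nonempty subsets and unbounded in `o`. -/
def IsClubIn (C : Set Ordinal) (o : Ordinal) : Prop :=
  (∀ α ∈ C, α < o) ∧
  (∀ S : Set Ordinal, S ⊆ C → S.Nonempty → (∃ β < o, ∀ x ∈ S, x ≤ β) → sSup S ∈ C) ∧
  (∀ α < o, ∃ β ∈ C, α < β)

/-- `F` (restricted to ordinals `< ω₁`) is an ℵ₁-filtration of `H`. -/
def IsAleph1Filtration {H : Type*} [AddCommGroup H] (F : Ordinal → AddSubgroup H) : Prop :=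
  (∀ α < omega1, Countable (F α)) ∧
  (∀ α β : Ordinal, α ≤ β → β < omega1 → F α ≤ F β) ∧
  (∀ α < omega1, Order.IsSuccLimit α → ∀ x : H, x ∈ F α ↔ ∃ β < α, x ∈ F β) ∧
  (∀ x : H, ∃ α < omega1, x ∈ F α)

/-- The forcing poset of partial bases. -/
def Ppb (H : Type*) [AddCommGroup H] : Set (Set H) :=
  {p | LinearIndependent ℤ ((↑) : p → H) ∧ p.Countable ∧
    Aleph1Free (H ⧸ AddSubgroup.closure p)}

universe u v

open Cardinal Order Submodule

theorem Aleph1Free.of_injective {A B : Type*} [AddCommGroup A] [AddCommGroup B]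
    (hB : Aleph1Free B) (f : A →+ B) (hf : Function.Injective f) : Aleph1Free A := by
  intro K hK
  let e : K ≃+ K.map f := K.equivMapOfInjective f hf
  have := hB _ (Countable.of_equiv K e.toEquiv)
  exact .of_equiv e.symm.toIntLinearEquiv

theorem Aleph1Free.free_map_mkQ {H : Type*} [AddCommGroup H] {N : Submodule ℤ H}
    (hN : Aleph1Free (H ⧸ N)) (P : Submodule ℤ H) [Countable P] :
    Module.Free ℤ (P.map N.mkQ) :=
  hN (P.map N.mkQ).toAddSubgroup <| Set.countable_coe_iff.2 <|
    (Set.countable_coe_iff.1 ‹Countable P›).image N.mkQ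

theorem Aleph1Free.quotient_bot {H : Type*} [AddCommGroup H] (hH : Aleph1Free H) :
    Aleph1Free (H ⧸ (⊥ : Submodule ℤ H)) :=
  hH.of_injective _ (quotEquivOfEqBot ⊥ rfl).injective

theorem Aleph1Free.quotient_span_basis_image {H ι : Type*} [AddCommGroup H] (hH : Aleph1Free H)
    (b : Module.Basis ι ℤ H) (s : Set ι) : Aleph1Free (H ⧸ span ℤ (b '' s)) :=
  let e := quotientEquivOfIsCompl _ _
    (b.linearIndependent.isCompl_span_image b.span_eq isCompl_compl)
  hH.of_injective ((span ℤ (b '' sᶜ)).subtype.toAddMonoidHom.comp e.toAddMonoidHom)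
    (Subtype.val_injective.comp e.injective)

theorem Submodule.countable_span {R M : Type*} [Semiring R] [Countable R] [AddCommMonoid M]
    [Module R M] {s : Set M} (hs : s.Countable) : Countable (span R s) := by
  have := hs.to_subtype
  rw [← Subtype.range_coe (s := s)]
  infer_instance

theorem iSup_lt_omega1 {ι : Type*} [Countable ι] {f : ι → Ordinal} (hf : ∀ i, f i < omega1) :
    ⨆ i, f i < omega1 := by
  rw [omega1, ord_aleph] at hf ⊢
  exact Ordinal.iSup_lt_omega_one hf

theorem isSuccLimit_omega1 : IsSuccLimit omega1 := isSuccLimit_ord (aleph0_le_aleph 1)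

theorem countable_Iio_of_lt_omega1 {o : Ordinal.{u}} (ho : o < omega1) :
    (Set.Iio o).Countable := by
  rw [← le_aleph0_iff_set_countable, mk_Iio_ordinal, ← lift_aleph0.{u + 1, u}, lift_le,
    ← lt_aleph_one_iff]
  exact lt_ord.1 ho

theorem exists_lt_omega1_forall_lt {ι : Type*} [Countable ι] (f : ι → Ordinal)
    (hf : ∀ i, f i < omega1) : ∃ β < omega1, ∀ i, f i < β := by
  have hsup : ⨆ i, f i < omega1 := iSup_lt_omega1 hf
  exact ⟨succ (⨆ i, f i), isSuccLimit_omega1.succ_lt hsup,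
    fun i => lt_succ_iff.2 (Ordinal.le_iSup f i)⟩

theorem exists_isSuccLimit_closed_under (f : Ordinal → Ordinal)
    (hf : ∀ γ < omega1, γ < f γ ∧ f γ < omega1) {α : Ordinal} (hα : α < omega1) :
    ∃ σ < omega1, α < σ ∧ IsSuccLimit σ ∧ ∀ β < σ, ∃ γ < σ, β ≤ γ ∧ f γ < σ := by
  set a : ℕ → Ordinal := fun n => f^[n] (succ α)
  have ha_succ : ∀ n, a (n + 1) = f (a n) := fun n => Function.iterate_succ_apply' f n _
  have ha : ∀ n, a n < omega1 := by
    intro n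
    induction n with
    | zero => exact isSuccLimit_omega1.succ_lt hα
    | succ n ih => exact ha_succ n ▸ (hf _ ih).2
  have hlt_succ : ∀ n, a n < a (n + 1) := fun n => ha_succ n ▸ (hf _ (ha n)).1
  have hlt_sup : ∀ n, a n < ⨆ n, a n :=
    fun n => (hlt_succ n).trans_le (Ordinal.le_iSup a (n + 1))
  refine ⟨⨆ n, a n, iSup_lt_omega1 ha,
    (lt_succ α).trans (hlt_sup 0), ?_, fun β hβ => ?_⟩
  · by_contra hlim
    obtain ⟨n, hn⟩ := exists_eq_ciSup_of_not_isSuccLimit Ordinal.bddAbove_of_small hlim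
    exact (hlt_sup n).ne hn
  · obtain ⟨n, hn⟩ := Ordinal.lt_iSup_iff.1 hβ
    exact ⟨a n, hlt_sup n, hn.le, ha_succ n ▸ hlt_sup (n + 1)⟩

namespace IsAleph1Filtration

variable {H : Type*} [AddCommGroup H] {F G : Ordinal → AddSubgroup H}

theorem exists_le_of_lt_omega1 (hF : IsAleph1Filtration F) (hG : IsAleph1Filtration G)
    {γ : Ordinal} (hγ : γ < omega1) : ∃ δ < omega1, F γ ≤ G δ := by
  choose level hlevel hmem using hG.2.2.2
  have := hF.1 γ hγ
  obtain ⟨δ, hδ, hlt⟩ := exists_lt_omega1_forall_lt (fun x : F γ => level x) fun x => hlevel x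
  exact ⟨δ, hδ, fun x hx => hG.2.1 _ δ (hlt ⟨x, hx⟩).le hδ (hmem x)⟩

theorem le_of_isSuccLimit (hF : IsAleph1Filtration F) (hG : IsAleph1Filtration G)
    {σ : Ordinal} (hσ : σ < omega1) (hlim : IsSuccLimit σ)
    (h : ∀ β < σ, ∃ γ ≤ σ, F β ≤ G γ) : F σ ≤ G σ := by
  intro x hx
  obtain ⟨β, hβ, hxβ⟩ := (hF.2.2.1 σ hσ hlim x).1 hx
  obtain ⟨γ, hγ, hFG⟩ := h β hβ
  exact hG.2.1 γ σ hγ hσ (hFG hxβ)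

theorem eq_of_isSuccLimit (hF : IsAleph1Filtration F) (hG : IsAleph1Filtration G)
    {σ : Ordinal} (hσ : σ < omega1) (hlim : IsSuccLimit σ)
    (h : ∀ β < σ, ∃ γ ≤ σ, F β ≤ G γ ∧ G β ≤ F γ) : F σ = G σ :=
  le_antisymm
    (hF.le_of_isSuccLimit hG hσ hlim fun β hβ => (h β hβ).imp fun _ => And.imp_right And.left)
    (hG.le_of_isSuccLimit hF hσ hlim fun β hβ => (h β hβ).imp fun _ => And.imp_right And.right)

theorem eq_sSup_of_forall_mem_eq (hF : IsAleph1Filtration F) (hG : IsAleph1Filtration G)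
    {S : Set Ordinal} (hne : S.Nonempty) {β : Ordinal} (hβ : β < omega1) (hSβ : ∀ s ∈ S, s ≤ β)
    (hS : ∀ s ∈ S, F s = G s) : F (sSup S) = G (sSup S) := by
  by_cases hmem : sSup S ∈ S
  · exact hS _ hmem
  have hσ : sSup S < omega1 := (csSup_le hne hSβ).trans_lt hβ
  have hlim : IsSuccLimit (sSup S) :=
    by_contra fun h => hmem (csSup_mem_of_not_isSuccLimit hne ⟨β, hSβ⟩ h)
  refine hF.eq_of_isSuccLimit hG hσ hlim fun γ hγ => ?_
  obtain ⟨s, hs, hγs⟩ := exists_lt_of_lt_csSup hne hγ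
  have hsσ : s ≤ sSup S := le_csSup ⟨β, hSβ⟩ hs
  exact ⟨s, hsσ, (hF.2.1 γ s hγs.le (hsσ.trans_lt hσ)).trans (hS s hs).le,
    (hG.2.1 γ s hγs.le (hsσ.trans_lt hσ)).trans (hS s hs).ge⟩

theorem exists_gt_le_and_le (hF : IsAleph1Filtration F) (hG : IsAleph1Filtration G)
    {γ : Ordinal} (hγ : γ < omega1) : ∃ δ, (γ < δ ∧ δ < omega1) ∧ F γ ≤ G δ ∧ G γ ≤ F δ := by
  obtain ⟨δ₁, hδ₁, hFG⟩ := hF.exists_le_of_lt_omega1 hG hγ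
  obtain ⟨δ₂, hδ₂, hGF⟩ := hG.exists_le_of_lt_omega1 hF hγ
  have hδ : max (succ γ) (max δ₁ δ₂) < omega1 :=
    max_lt (isSuccLimit_omega1.succ_lt hγ) (max_lt hδ₁ hδ₂)
  refine ⟨_, ⟨(lt_succ γ).trans_le (le_max_left _ _), hδ⟩, ?_, ?_⟩
  · exact hFG.trans (hG.2.1 _ _ ((le_max_left _ _).trans (le_max_right _ _)) hδ)
  · exact hGF.trans (hF.2.1 _ _ ((le_max_right _ _).trans (le_max_right _ _)) hδ)

theorem exists_gt_eq (hF : IsAleph1Filtration F) (hG : IsAleph1Filtration G)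
    {α : Ordinal} (hα : α < omega1) : ∃ σ < omega1, α < σ ∧ F σ = G σ := by
  -- quantifying over every `γ` lets `choose` produce a total function
  choose f hf using fun γ => (em (γ < omega1)).elim
    (fun hγ => (hF.exists_gt_le_and_le hG hγ).imp fun _ h _ => h)
    (fun hγ => ⟨0, fun h => absurd h hγ⟩)
  obtain ⟨σ, hσ, hασ, hlim, hclosed⟩ :=
    exists_isSuccLimit_closed_under f (fun γ hγ => (hf γ hγ).1) hα
  refine ⟨σ, hσ, hασ, hF.eq_of_isSuccLimit hG hσ hlim fun β hβ => ?_⟩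
  obtain ⟨γ, hγσ, hβγ, hfγ⟩ := hclosed β hβ
  have hγ : γ < omega1 := hγσ.trans hσ
  exact ⟨f γ, hfγ.le, (hF.2.1 β γ hβγ hγ).trans (hf γ hγ).2.1,
    (hG.2.1 β γ hβγ hγ).trans (hf γ hγ).2.2⟩

theorem isClubIn_setOf_eq (hF : IsAleph1Filtration F) (hG : IsAleph1Filtration G) :
    IsClubIn {α | α < omega1 ∧ F α = G α} omega1 := by
  refine ⟨fun α hα => hα.1, fun S hSC hne ⟨β, hβ, hSβ⟩ => ⟨?_, ?_⟩, fun α hα => ?_⟩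
  · exact (csSup_le hne hSβ).trans_lt hβ
  · exact hF.eq_sSup_of_forall_mem_eq hG hne hβ hSβ fun s hs => (hSC hs).2
  · obtain ⟨σ, hσ, hασ, hFG⟩ := hF.exists_gt_eq hG hα
    exact ⟨σ, ⟨hσ, hFG⟩, hασ⟩

end IsAleph1Filtration

theorem exists_basis_Iio_omega1 {H : Type u} [AddCommGroup H] [Module.Free ℤ H]
    (hcard : #H = ℵ₁) : Nonempty (Module.Basis (Set.Iio omega1.{v}) ℤ H) := by
  have hrank : Module.rank ℤ H = ℵ₁ := by
    rw [Module.Free.rank_eq_mk_of_infinite_lt ℤ H (by simp [hcard]), hcard]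
  have hindex : Nonempty (Module.Free.ChooseBasisIndex ℤ H ≃ Set.Iio omega1.{v}) := by
    rw [← lift_mk_eq', ← Module.Free.rank_eq_card_chooseBasisIndex, hrank, mk_Iio_ordinal,
      omega1, card_ord]
    simp
  exact ⟨(Module.Free.chooseBasis ℤ H).reindex hindex.some⟩

section BasisFiltration

variable {H : Type*} [AddCommGroup H] (b : Module.Basis (Set.Iio omega1) ℤ H)

def basisFiltration (α : Ordinal) : AddSubgroup H :=
  (span ℤ (b '' {i | i.1 < α})).toAddSubgroup

theorem mem_basisFiltration {α : Ordinal} {x : H} :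
    x ∈ basisFiltration b α ↔ ∀ i ∈ (b.repr x).support, i.1 < α :=
  b.mem_span_image

theorem exists_lt_mem_basisFiltration {α : Ordinal} (hα : IsSuccLimit α) {x : H}
    (hx : ∀ i ∈ (b.repr x).support, i.1 < α) : ∃ β < α, x ∈ basisFiltration b β := by
  refine ⟨(b.repr x).support.sup fun i => succ i.1, ?_, ?_⟩
  · exact (Finset.sup_lt_iff hα.bot_lt).2 fun i hi => hα.succ_lt (hx i hi)
  · exact (mem_basisFiltration b).2 fun i hi =>
      (lt_succ i.1).trans_le (Finset.le_sup (f := fun i => succ i.1) hi)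

theorem isAleph1Filtration_basisFiltration : IsAleph1Filtration (basisFiltration b) := by
  refine ⟨fun α hα => ?_, fun α β hαβ _ => ?_, fun α _ hα x => ⟨fun hx => ?_, ?_⟩, fun x => ?_⟩
  · exact countable_span ((((countable_Iio_of_lt_omega1 hα).preimage
      Subtype.val_injective)).image b)
  · exact span_mono (Set.image_mono fun i hi => lt_of_lt_of_le hi hαβ)
  · exact exists_lt_mem_basisFiltration b hα ((mem_basisFiltration b).1 hx)
  · rintro ⟨β, hβα, hx⟩
    exact span_mono (Set.image_mono fun i hi => lt_trans hi hβα) hx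
  · exact exists_lt_mem_basisFiltration b isSuccLimit_omega1 fun i _ => i.2

end BasisFiltration

section WellOrderedFiltration

variable {R M : Type*} [Ring R] [AddCommGroup M] [Module R M]

theorem Submodule.exists_linearIndepOn_mkQ_of_free_map (N P : Submodule R M)
    [Module.Free R (P.map N.mkQ)] :
    ∃ T ⊆ (P : Set M), LinearIndepOn R N.mkQ T ∧ P ≤ N ⊔ span R T := by
  set Q := P.map N.mkQ
  set b := Module.Free.chooseBasis R Q
  have hlift : ∀ k, ∃ x ∈ P, N.mkQ x = b k := fun k => (b k).2
  choose s hsP hsb using hlift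
  have hs : N.mkQ ∘ s = Q.subtype ∘ b := funext hsb
  refine ⟨Set.range s, Set.range_subset_iff.2 hsP, ?_, ?_⟩
  · have hind : LinearIndependent R (N.mkQ ∘ s) :=
      hs ▸ b.linearIndependent.map' Q.subtype Q.ker_subtype
    simpa [LinearIndepOn, Function.comp_def, Set.apply_rangeSplitting] using
      hind.comp _ (Set.rangeSplitting_injective s)
  · rw [← comap_map_mkQ, ← map_le_iff_le_comap, map_span, ← Set.range_comp, hs, Set.range_comp,
      ← map_span, b.span_eq, map_top, range_subtype]

variable {ι : Type*} [LinearOrder ι] [WellFoundedLT ι]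

theorem linearIndepOn_iUnion_of_linearIndepOn_mkQ (G : ι → Submodule R M) (T : ι → Set M)
    (hTG : ∀ i, T i ⊆ G i) (hT : ∀ i, LinearIndepOn R (⨆ j < i, G j).mkQ (T i)) :
    LinearIndepOn R id (⋃ i, T i) := by
  set U : ι → Set M := fun i => ⋃ j ≤ i, T j
  have hU : Monotone U := fun i i' h =>
    Set.biUnion_mono (fun j hj => le_trans hj h) fun _ _ => le_rfl
  have hUi : ∀ i, LinearIndepOn R id (U i) := by
    intro i
    induction i using WellFoundedLT.induction with
    | _ i ih =>
    have hsplit : U i = (⋃ j : Set.Iio i, U j) ∪ T i := by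
      ext x
      simp only [U, Set.mem_union, Set.mem_iUnion, exists_prop, Subtype.exists, Set.mem_Iio]
      constructor
      · rintro ⟨k, hk, hx⟩
        rcases hk.lt_or_eq with hk | rfl
        exacts [Or.inl ⟨k, hk, k, le_rfl, hx⟩, Or.inr hx]
      · rintro (⟨j, hj, k, hk, hx⟩ | hx)
        exacts [⟨k, hk.trans hj.le, hx⟩, ⟨i, le_rfl, hx⟩]
    rw [hsplit]
    refine LinearIndepOn.union_id_of_quotient ?_ ?_ (hT i)
    · simp only [U, Set.iUnion_subset_iff]
      intro j k hk x hx
      exact le_iSup₂ (f := fun j (_ : j < i) => G j) k (hk.trans_lt j.2) (hTG k hx)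
    · exact linearIndepOn_iUnion_of_directed (hU.comp (Subtype.mono_coe _)).directed_le
        fun j => ih j j.2
  have hTU : (⋃ i, T i) = ⋃ i, U i :=
    Set.Subset.antisymm (Set.iUnion_mono fun i => Set.subset_biUnion_of_mem (u := T) le_rfl)
      (Set.iUnion_subset fun i => Set.iUnion₂_subset fun j _ => Set.subset_iUnion T j)
  exact hTU ▸ linearIndepOn_iUnion_of_directed hU.directed_le hUi

theorem le_span_iUnion_of_le_sup_span (G : ι → Submodule R M) (T : ι → Set M)
    (h : ∀ i, G i ≤ (⨆ j < i, G j) ⊔ span R (T i)) (i : ι) : G i ≤ span R (⋃ i, T i) := by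
  induction i using WellFoundedLT.induction with
  | _ i ih => exact (h i).trans (sup_le (iSup₂_le ih) (span_mono (Set.subset_iUnion T i)))

theorem Module.Free.of_iSup_eq_top_of_free_map_mkQ (G : ι → Submodule R M) (htop : ⨆ i, G i = ⊤)
    (hfree : ∀ i, Module.Free R ((G i).map (⨆ j < i, G j).mkQ)) : Module.Free R M := by
  choose T hTG hT hspan using fun i =>
    have := hfree i
    (⨆ j < i, G j).exists_linearIndepOn_mkQ_of_free_map (G i)
  have hli := linearIndepOn_iUnion_of_linearIndepOn_mkQ G T hTG hT
  have htop' : ⊤ ≤ span R (Set.range ((↑) : (⋃ i, T i) → M)) := by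
    rw [Subtype.range_coe, ← htop]
    exact iSup_le (le_span_iUnion_of_le_sup_span G T hspan)
  exact Module.Free.of_basis (Module.Basis.mk hli htop')

end WellOrderedFiltration

theorem IsClubIn.predecessor_trichotomy {C : Set Ordinal} (hC : IsClubIn C omega1) {c : Ordinal}
    (hc : c ∈ C) :
    (∀ d ∈ C, c ≤ d) ∨ (∃ σ ∈ C, σ < c ∧ ∀ d ∈ C, d < c → d ≤ σ) ∨
      (IsSuccLimit c ∧ ∀ β < c, ∃ d ∈ C, β < d ∧ d < c) := by
  set T := {d | d ∈ C ∧ d < c}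
  rcases T.eq_empty_or_nonempty with hT | hT
  · exact Or.inl fun d hd => not_lt.1 fun hdc => hT.subset ⟨hd, hdc⟩
  have hTc : ∀ d ∈ T, d ≤ c := fun d hd => hd.2.le
  have hσC : sSup T ∈ C := hC.2.1 T (fun d hd => hd.1) hT ⟨c, hC.1 c hc, hTc⟩
  rcases (csSup_le hT hTc).lt_or_eq with hσc | hσc
  · exact Or.inr (Or.inl ⟨sSup T, hσC, hσc, fun d hd hdc => le_csSup ⟨c, hTc⟩ ⟨hd, hdc⟩⟩)
  · refine Or.inr (Or.inr ⟨hσc ▸ by_contra fun h => ?_, fun β hβ => ?_⟩)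
    · exact (csSup_mem_of_not_isSuccLimit hT ⟨c, hTc⟩ h).2.ne hσc
    · obtain ⟨d, hd, hβd⟩ := exists_lt_of_lt_csSup hT (hσc ▸ hβ)
      exact ⟨d, hd.1, hβd, hd.2⟩

theorem IsAleph1Filtration.free_map_mkQ_iSup_lt {H : Type*} [AddCommGroup H]
    (hH : Aleph1Free H) {F : Ordinal → AddSubgroup H} (hF : IsAleph1Filtration F)
    {C : Set Ordinal} (hC : IsClubIn C omega1) (hq : ∀ α ∈ C, Aleph1Free (H ⧸ F α)) (c : C) :
    Module.Free ℤ ((F c).toIntSubmodule.map (⨆ d < c, (F d).toIntSubmodule).mkQ) := by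
  have : Countable (F c).toIntSubmodule := hF.1 c (hC.1 c c.2)
  rcases hC.predecessor_trichotomy c.2 with hmin | ⟨σ, hσC, hσc, hσmax⟩ | ⟨hlim, hcofinal⟩
  · have hbot : ⨆ d < c, (F d).toIntSubmodule = ⊥ :=
      iSup₂_eq_bot.2 fun d hdc => absurd (hmin d d.2) (not_le.2 hdc)
    rw [hbot]
    exact hH.quotient_bot.free_map_mkQ _
  · have hpred : ⨆ d < c, (F d).toIntSubmodule = (F σ).toIntSubmodule := by
      refine le_antisymm (iSup₂_le fun d hdc => ?_) (le_iSup₂_of_le ⟨σ, hσC⟩ hσc le_rfl)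
      exact AddSubgroup.toIntSubmodule.monotone (hF.2.1 d σ (hσmax d d.2 hdc) (hC.1 σ hσC))
    rw [hpred]
    have hσ : Aleph1Free (H ⧸ (F σ).toIntSubmodule) := hq σ hσC
    exact hσ.free_map_mkQ _
  · have hle : (F c).toIntSubmodule ≤ ⨆ d < c, (F d).toIntSubmodule := by
      intro x hx
      obtain ⟨β, hβc, hxβ⟩ := (hF.2.2.1 c (hC.1 c c.2) hlim x).1 hx
      obtain ⟨d, hdC, hβd, hdc⟩ := hcofinal β hβc
      exact le_iSup₂ (f := fun (d : C) (_ : d < c) => (F d).toIntSubmodule) ⟨d, hdC⟩ hdc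
        (hF.2.1 β d hβd.le (hC.1 d hdC) hxβ)
    rw [LinearMap.le_ker_iff_map.1 (by rwa [ker_mkQ])]
    infer_instance

theorem free_of_isClubIn {H : Type*} [AddCommGroup H] (hH : Aleph1Free H)
    {F : Ordinal → AddSubgroup H} (hF : IsAleph1Filtration F) {C : Set Ordinal}
    (hC : IsClubIn C omega1) (hq : ∀ α ∈ C, Aleph1Free (H ⧸ F α)) : Module.Free ℤ H := by
  refine Module.Free.of_iSup_eq_top_of_free_map_mkQ (fun c : C => (F c).toIntSubmodule)
    (eq_top_iff.2 fun x _ => ?_) (hF.free_map_mkQ_iSup_lt hH hC hq)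
  obtain ⟨α, hα, hx⟩ := hF.2.2.2 x
  obtain ⟨c, hcC, hαc⟩ := hC.2.2 α hα
  exact mem_iSup_of_mem (⟨c, hcC⟩ : C) (hF.2.1 α c hαc.le (hC.1 c hcC) hx)

/-- An ℵ₁-free group `H` of cardinality ℵ₁ with ℵ₁-filtration `F` is free
iff there is a club `C` in ω₁ such that `H ⧸ F α` is ℵ₁-free for all `α ∈ C`. -/
theorem freeIffClubOfAleph1FreeQuotients {H : Type*} [AddCommGroup H]
    (hH : Aleph1Free H) (hcard : Cardinal.mk H = Cardinal.aleph 1)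
    (F : Ordinal → AddSubgroup H) (hF : IsAleph1Filtration F) :
    Module.Free ℤ H ↔
      ∃ C : Set Ordinal, IsClubIn C omega1 ∧ ∀ α ∈ C, Aleph1Free (H ⧸ F α) := by
  refine ⟨fun hfree => ?_, fun ⟨C, hC, hq⟩ => free_of_isClubIn hH hF hC hq⟩
  obtain ⟨b⟩ := exists_basis_Iio_omega1 hcard
  refine ⟨_, hF.isClubIn_setOf_eq (isAleph1Filtration_basisFiltration b), fun α hα => ?_⟩
  rw [hα.2]
  exact hH.quotient_span_basis_image b _
end

section
/- Assume the Continuum Hypothesis (2^{ℵ₀} = ℵ₁). Let P = ∏_{n∈ℕ} ℤ be the Baer–Specker group. Then P has cardinality ℵ₁, and for every ℵ₁-filtration {P_α : α < ω₁} of P the set E = {α < ω₁ : P/P_α is not ℵ₁-free} contains a club in ω₁; that is, P is turbid. -/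
/-!
The unit vectors `eₙ` lie in `F α` for a club of `α`, since each lies in some countable stage
and `ω₁` has uncountable cofinality. For such `α`, `F α` contains `⊕ ℤ` but is countable, so it
misses some `x_A = ∑_{n ∈ A} n! eₙ` with `A ⊆ ℕ`. Every `k > 0` divides `x_A` modulo `⊕ ℤ`, so the
image of `x_A` in `P / F α` is a nonzero element divisible by all positive integers; the countable
subgroup generated by its chosen divisors cannot be free, as no basis coordinate of a nonzero
element is divisible by every integer.
-/

open Cardinal Ordinal Nat

theorem Module.Free.eq_zero_of_forall_exists_nsmul_eq {M : Type*} [AddCommGroup M]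
    [Module.Free ℤ M] {x : M} (h : ∀ n : ℕ+, ∃ y : M, (n : ℕ) • y = x) : x = 0 := by
  let b := Module.Free.chooseBasis ℤ M
  suffices b.repr x = 0 by simpa using this
  ext i
  have hdvd (n : ℕ+) : ((n : ℕ) : ℤ) ∣ b.repr x i := by
    obtain ⟨y, rfl⟩ := h n
    exact ⟨b.repr y i, by simp⟩
  exact Int.eq_zero_of_dvd_of_natAbs_lt_natAbs (hdvd (b.repr x i).natAbs.succPNat)
    (by rw [Nat.succPNat_coe, Int.natAbs_natCast]; exact Nat.lt_succ_self _)

theorem not_aleph1Free_of_forall_exists_nsmul_eq {G : Type*} [AddCommGroup G] {x : G}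
    (hx : x ≠ 0) (h : ∀ n : ℕ+, ∃ y : G, (n : ℕ) • y = x) : ¬ Aleph1Free G := by
  intro hfree
  choose y hy using h
  let K : Submodule ℤ G := Submodule.span ℤ (Set.range y)
  have hyK (n : ℕ+) : y n ∈ K := Submodule.subset_span ⟨n, rfl⟩
  have : Module.Free ℤ K := hfree K.toAddSubgroup (inferInstanceAs (Countable K))
  have hxK : x ∈ K := by
    rw [← hy 1]
    exact K.nsmul_mem (hyK 1) _
  have : (⟨x, hxK⟩ : K) = 0 :=
    Module.Free.eq_zero_of_forall_exists_nsmul_eq fun n => ⟨⟨y n, hyK n⟩, Subtype.ext (hy n)⟩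
  exact hx (congrArg Subtype.val this)

theorem AddSubgroup.mem_of_finite_support {ι : Type*} [DecidableEq ι] {K : AddSubgroup (ι → ℤ)}
    (hK : ∀ i, Pi.single i 1 ∈ K) {f : ι → ℤ} (hf : (Function.support f).Finite) : f ∈ K := by
  have : f = ∑ i ∈ hf.toFinset, f i • Pi.single i 1 := by
    ext j
    by_cases hj : f j = 0 <;> simp [Finset.sum_apply, Pi.single_apply, hj]
  rw [this]
  exact sum_mem fun i _ => zsmul_mem (hK i) _

instance Set.uncountable_of_infinite {α : Type*} [Infinite α] : Uncountable (Set α) :=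
  aleph0_lt_mk_iff.mp <| by
    rw [mk_set]
    exact (aleph0_le_mk α).trans_lt (cantor _)

noncomputable def factorialIndicator (A : Set ℕ) : ℕ → ℤ := A.indicator fun n => (n ! : ℤ)

theorem factorialIndicator_injective : Function.Injective factorialIndicator := by
  intro A B hAB
  ext n
  have h := congrFun hAB n
  have hfac : (n ! : ℤ) ≠ 0 := by exact_mod_cast n.factorial_ne_zero
  by_cases hA : n ∈ A <;> by_cases hB : n ∈ B <;> simp_all [factorialIndicator, eq_comm]

theorem exists_nsmul_eq_factorialIndicator_of_le (A : Set ℕ) {k : ℕ} (hk : 0 < k) :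
    ∃ y : ℕ → ℤ, ∀ n, k ≤ n → (k • y) n = factorialIndicator A n := by
  refine ⟨A.indicator fun n => ((n ! / k : ℕ) : ℤ), fun n hn => ?_⟩
  by_cases hnA : n ∈ A
  · simp only [Pi.smul_apply, factorialIndicator, Set.indicator_of_mem hnA]
    push_cast
    exact Int.mul_ediv_cancel' (Int.natCast_dvd_natCast.2 (Nat.dvd_factorial hk hn))
  · simp [factorialIndicator, hnA]

theorem not_aleph1Free_quotient_of_countable_of_single_mem {K : AddSubgroup (ℕ → ℤ)}
    [Countable K] (hK : ∀ n, Pi.single n 1 ∈ K) : ¬ Aleph1Free ((ℕ → ℤ) ⧸ K) := by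
  obtain ⟨A, hA⟩ : ∃ A, factorialIndicator A ∉ K := by
    by_contra! h
    have hinj : Function.Injective fun A => (⟨_, h A⟩ : K) :=
      fun A B hAB => factorialIndicator_injective (congrArg Subtype.val hAB)
    exact not_countable (α := Set ℕ) hinj.countable
  refine not_aleph1Free_of_forall_exists_nsmul_eq
    (x := (factorialIndicator A : (ℕ → ℤ) ⧸ K)) (by rwa [Ne, QuotientAddGroup.eq_zero_iff])
    fun k => ?_
  obtain ⟨y, hy⟩ := exists_nsmul_eq_factorialIndicator_of_le A k.pos
  refine ⟨y, ?_⟩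
  rw [← QuotientAddGroup.mk_nsmul, QuotientAddGroup.eq_iff_sub_mem]
  refine AddSubgroup.mem_of_finite_support hK ((Set.finite_Iio (k : ℕ)).subset fun n hn => ?_)
  by_contra hkn
  exact hn (sub_eq_zero.2 (hy n (not_lt.1 hkn)))

theorem omega1_eq_omega_one : omega1 = ω₁ := ord_aleph 1

theorem isClubIn_omega1_setOf_forall {ι : Type*} [Countable ι] {P : ι → Ordinal → Prop}
    (hmono : ∀ i α β, α ≤ β → β < omega1 → P i α → P i β) (hex : ∀ i, ∃ α < omega1, P i α) :
    IsClubIn {α | α < omega1 ∧ ∀ i, P i α} omega1 := by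
  refine ⟨fun α hα => hα.1, ?_, fun γ hγ => ?_⟩
  · rintro S hS ⟨α, hαS⟩ ⟨β, hβ, hSβ⟩
    have hsup : sSup S < omega1 := (csSup_le ⟨α, hαS⟩ hSβ).trans_lt hβ
    exact ⟨hsup, fun i => hmono i α _ (le_csSup ⟨β, hSβ⟩ hαS) hsup ((hS hαS).2 i)⟩
  · choose f hf hPf using hex
    have hsucc : Order.succ γ < omega1 := (isSuccLimit_ord (aleph0_le_aleph 1)).succ_lt hγ
    have hsup : ⨆ i, f i < omega1 := by
      rw [omega1_eq_omega_one] at hf ⊢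
      exact Ordinal.iSup_lt_omega_one hf
    have hmax : max (Order.succ γ) (⨆ i, f i) < omega1 := max_lt hsucc hsup
    refine ⟨_, ⟨hmax, fun i => hmono i _ _ ?_ hmax (hPf i)⟩,
      (Order.lt_succ γ).trans_le (le_max_left _ _)⟩
    exact (Ordinal.le_iSup f i).trans (le_max_right _ _)

/-- Under CH, the Baer–Specker group `P = ∏_{n ∈ ℕ} ℤ` has cardinality ℵ₁
and is turbid: for every ℵ₁-filtration `F` of `P`, the set
`E = {α < ω₁ : P/F α is not ℵ₁-free}` contains a club in ω₁. -/
theorem baerSpecker_turbid_of_CH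
    (hCH : (2 : Cardinal) ^ Cardinal.aleph0 = Cardinal.aleph 1) :
    Cardinal.mk (ℕ → ℤ) = Cardinal.aleph 1 ∧
    ∀ F : Ordinal → AddSubgroup (ℕ → ℤ), IsAleph1Filtration F →
      ∃ C : Set Ordinal, IsClubIn C omega1 ∧
        C ⊆ {α : Ordinal | α < omega1 ∧ ¬ Aleph1Free ((ℕ → ℤ) ⧸ F α)} := by
  refine ⟨lift_inj.1 (by simpa using hCH), fun F ⟨hcount, hmono, _, hcover⟩ => ?_⟩
  refine ⟨_, isClubIn_omega1_setOf_forall (P := fun n α => Pi.single n 1 ∈ F α)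
    (fun n α β hαβ hβ => (hmono α β hαβ hβ ·)) (fun n => hcover _), ?_⟩
  rintro α ⟨hα, hsingle⟩
  have : Countable (F α) := hcount α hα
  exact ⟨hα, not_aleph1Free_quotient_of_countable_of_single_mem hsingle⟩
end

section
/- Let H = ⊕_{n∈ℕ} ℤ be the free abelian group on countably many generators. Then the poset (P_pb, ≤) for H is not ℵ₁-closed: the sets S_j = {s_i : i < j}, where s_i = e_i − (i+1)e_{i+1}, form a strictly descending sequence in P_pb that has no lower bound in P_pb. -/
/-- The standard basis of `H = ⊕_{n ∈ ℕ} ℤ`. -/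
noncomputable def e (i : ℕ) : ℕ →₀ ℤ := Finsupp.single i 1

/-- `s i = e i - (i+1) • e (i+1)`. -/
noncomputable def s (i : ℕ) : ℕ →₀ ℤ := e i - ((i : ℤ) + 1) • e (i + 1)

/-- `S j = {s i : i < j}`. -/
def Sset (j : ℕ) : Set (ℕ →₀ ℤ) := s '' Set.Iio j

/-! Modulo `⟨s 0, …, s (j-1)⟩` each `e i` with `i < j` becomes a multiple of `e j`, so the `s i`
with `i < j` and the `e i` with `i ≥ j` form a basis of `ℕ →₀ ℤ`; the quotient by `S j` is then
isomorphic to a subgroup of `ℕ →₀ ℤ`, and all subgroups of `ℕ →₀ ℤ` are free.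

If `q ∈ P_pb` contained every `s i`, the countable ℵ₁-free group `(ℕ →₀ ℤ) ⧸ ⟨q⟩` would be free,
yet in it `e 0 = m! • e m` is divisible by every factorial. Hence `e 0`, and then every `e m`, lies
in `⟨q⟩`, so `q` is a basis. But `e 0 = ∑_{i<m} i! • s i + m! • e m` forces the `q`-coordinate of
`e 0` at `s i` to be `i!` for every `i`: infinitely many nonzero coordinates. -/

open Finsupp Submodule Set Function Nat

theorem linearIndependent_of_triangular {R M ι κ : Type*} [Ring R] [NoZeroDivisors R]
    [AddCommGroup M] [Module R M] [LinearOrder κ] (v : ι → M) (c : κ → M →ₗ[R] R) {d : ι → κ}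
    (hd : Injective d) (hlead : ∀ i, c (d i) (v i) ≠ 0)
    (hzero : ∀ i k, d i < k → c k (v i) = 0) : LinearIndependent R v := by
  classical
  rw [linearIndependent_iff']
  intro t g hg
  induction t using Finset.induction_on_max_value d with
  | empty => simp
  | insert a t hat hmax ih =>
    have hga : g a = 0 := by
      have hsum := congrArg (c (d a)) hg
      rw [Finset.sum_insert hat, map_add, map_sum, Finset.sum_eq_zero fun i hi => ?_, add_zero,
        map_smul, smul_eq_mul, map_zero] at hsum
      · exact (mul_eq_zero.mp hsum).resolve_right (hlead a)
      · rw [map_smul, hzero i (d a) ((hmax i hi).lt_of_ne (hd.ne (ne_of_mem_of_not_mem hi hat))),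
          smul_zero]
    rw [Finset.sum_insert hat, hga, zero_smul, zero_add] at hg
    intro i hi
    rcases Finset.mem_insert.mp hi with rfl | hi
    exacts [hga, ih hg i hi]

theorem Finsupp.linearIndependent_of_lowerTriangular {R : Type*} [Ring R] [NoZeroDivisors R]
    (v : ℕ → ℕ →₀ R) (hlead : ∀ i, v i i ≠ 0) (hzero : ∀ i k, k < i → v i k = 0) :
    LinearIndependent R v :=
  linearIndependent_of_triangular v (fun k : ℕᵒᵈ => lapply (OrderDual.ofDual k))
    (d := OrderDual.toDual) OrderDual.toDual.injective hlead
    fun i k hik => hzero i (OrderDual.ofDual k) hik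

theorem Submodule.exists_mem_forall_dvd_apply {R M : Type*} [CommRing R] [IsPrincipalIdealRing R]
    [AddCommGroup M] [Module R M] (P : Submodule R M) (f : M →ₗ[R] R) :
    ∃ x ∈ P, ∀ y ∈ P, f x ∣ f y := by
  obtain ⟨x, hx, hgen⟩ := mem_map.mp (IsPrincipal.generator_mem (P.map f))
  exact ⟨x, hx, fun y hy => hgen ▸ (IsPrincipal.mem_iff_generator_dvd _).mp (mem_map_of_mem hy)⟩

theorem Finsupp.mem_supported_Iio_of_apply_eq_zero {R M : Type*} [Semiring R] [AddCommMonoid M]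
    [Module R M] {z : ℕ →₀ M} {n : ℕ} (hz : z ∈ supported M R (Iic n)) (hzn : z n = 0) :
    z ∈ supported M R (Iio n) := by
  rw [mem_supported'] at hz ⊢
  intro m hm
  rcases (not_lt.mp (mem_Iio.not.mp hm)).eq_or_lt with rfl | hlt
  exacts [hzn, hz m (not_le.mpr hlt)]

theorem Finsupp.mem_span_of_forall_dvd_apply {R : Type*} [CommRing R]
    (N : Submodule R (ℕ →₀ R)) (x : ℕ → ℕ →₀ R) (hxN : ∀ n, x n ∈ N)
    (hx : ∀ n, x n ∈ supported R R (Iic n))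
    (hdvd : ∀ n, ∀ y ∈ N, y ∈ supported R R (Iic n) → x n n ∣ y n) (n : ℕ) :
    ∀ y ∈ N, y ∈ supported R R (Iio n) → y ∈ span R (range fun m : {m // x m m ≠ 0} => x m) := by
  induction n with
  | zero =>
    intro y _ hy
    obtain rfl : y = 0 := ext fun m => (mem_supported' R y).mp hy m (Nat.not_lt_zero m)
    exact zero_mem _
  | succ n ih =>
    intro y hyN hy
    rw [Iio_add_one_eq_Iic] at hy
    obtain ⟨t, ht⟩ := hdvd n y hyN hy
    have hrest : y - t • x n ∈ span R (range fun m : {m // x m m ≠ 0} => x m) := by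
      refine ih _ (N.sub_mem hyN (N.smul_mem t (hxN n))) ?_
      refine mem_supported_Iio_of_apply_eq_zero (sub_mem hy (smul_mem _ t (hx n))) ?_
      rw [sub_apply, smul_apply, smul_eq_mul, ht, mul_comm, sub_self]
    have hxn : x n ∈ span R (range fun m : {m // x m m ≠ 0} => x m) := by
      by_cases h : x n n = 0
      · exact ih _ (hxN n) (mem_supported_Iio_of_apply_eq_zero (hx n) h)
      · exact subset_span ⟨⟨n, h⟩, rfl⟩
    simpa using add_mem hrest (smul_mem _ t hxn)

theorem Finsupp.free_submodule_nat {R : Type*} [CommRing R] [IsDomain R] [IsPrincipalIdealRing R]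
    (N : Submodule R (ℕ →₀ R)) : Module.Free R N := by
  choose x hx hdvd using
    fun n => (N ⊓ supported R R (Iic n)).exists_mem_forall_dvd_apply (lapply n)
  let v : {n // x n n ≠ 0} → ℕ →₀ R := fun n => x n
  have hli : LinearIndependent R v :=
    linearIndependent_of_triangular v lapply Subtype.val_injective (fun n => n.2)
      fun n m hnm => (mem_supported' R _).mp (hx n).2 m (not_le.mpr hnm)
  have hspan : span R (range v) = N := by
    refine le_antisymm (span_le.mpr (range_subset_iff.mpr fun n => (hx n).1)) fun y hy => ?_
    obtain ⟨n, hn⟩ := y.support.exists_nat_subset_range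
    refine mem_span_of_forall_dvd_apply N x (fun n => (hx n).1) (fun n => (hx n).2)
      (fun n y hyN hy => hdvd n y ⟨hyN, hy⟩) n y hy ?_
    rwa [mem_supported, ← Finset.coe_range, Finset.coe_subset]
  rw [← hspan]
  exact Module.Free.of_basis (Module.Basis.span hli)

theorem Aleph1Free.of_injective_s5 {G M : Type*} [AddCommGroup G] [AddCommGroup M]
    (hM : Aleph1Free M) (f : G →+ M) (hf : Injective f) : Aleph1Free G := by
  intro K _
  let eK := K.equivMapOfInjective f hf
  have := hM (K.map f) eK.symm.injective.countable
  exact Module.Free.of_equiv eK.symm.toIntLinearEquiv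

theorem aleph1Free_finsupp_nat : Aleph1Free (ℕ →₀ ℤ) :=
  fun K _ => free_submodule_nat (AddSubgroup.toIntSubmodule K)

theorem Aleph1Free.quotient_of_isCompl {M : Type*} [AddCommGroup M] (hM : Aleph1Free M)
    {p : Set M} {C : Submodule ℤ M} (h : IsCompl (span ℤ p) C) :
    Aleph1Free (M ⧸ AddSubgroup.closure p) := by
  let π : (M ⧸ AddSubgroup.closure p) ≃+ (M ⧸ span ℤ p) :=
    QuotientAddGroup.quotientAddEquivOfEq (span_int_eq_addSubgroupClosure p).symm
  let ψ := quotientEquivOfIsCompl _ _ h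
  exact hM.of_injective_s5 ((C.subtype.toAddMonoidHom.comp ψ.toAddMonoidHom).comp π.toAddMonoidHom)
    (C.injective_subtype.comp (ψ.injective.comp π.injective))

theorem s_apply_self (i : ℕ) : s i i = 1 := by
  simp [s, e]

theorem s_apply_of_lt {i k : ℕ} (h : k < i) : s i k = 0 := by
  simp [s, e, h.ne', (h.trans (Nat.lt_succ_self i)).ne']

theorem s_linearIndependent : LinearIndependent ℤ s :=
  linearIndependent_of_lowerTriangular s (fun i => by simp [s_apply_self])
    fun _ _ => s_apply_of_lt

theorem span_range_e : span ℤ (range e) = ⊤ :=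
  Finsupp.basisSingleOne.span_eq

noncomputable def sThenE (j : ℕ) : ℕ → ℕ →₀ ℤ := (Iio j).piecewise s e

theorem sThenE_linearIndependent (j : ℕ) : LinearIndependent ℤ (sThenE j) := by
  refine linearIndependent_of_lowerTriangular _ (fun i => ?_) fun i k hki => ?_
  · by_cases h : i < j <;> simp [sThenE, h, s_apply_self, e]
  · by_cases h : i < j
    · simp [sThenE, h, s_apply_of_lt hki]
    · simp [sThenE, h, e, hki.ne']

theorem span_range_sThenE (j : ℕ) : span ℤ (range (sThenE j)) = ⊤ := by
  have he_ge : ∀ i, j ≤ i → e i ∈ span ℤ (range (sThenE j)) := fun i hi =>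
    subset_span ⟨i, by simp [sThenE, not_lt.mpr hi]⟩
  have he_le : ∀ i, i ≤ j → e i ∈ span ℤ (range (sThenE j)) := by
    intro i hi
    induction hi using Nat.decreasingInduction with
    | self => exact he_ge j le_rfl
    | of_succ i hij ih =>
      have hs : s i ∈ span ℤ (range (sThenE j)) := subset_span ⟨i, by simp [sThenE, hij]⟩
      rw [show e i = s i + ((i : ℤ) + 1) • e (i + 1) by rw [s, sub_add_cancel]]
      exact add_mem hs (smul_mem _ _ ih)
  rw [eq_top_iff, ← span_range_e, span_le]
  rintro _ ⟨i, rfl⟩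
  exact (le_total i j).elim (he_le i) (he_ge i)

theorem isCompl_span_Sset (j : ℕ) : IsCompl (span ℤ (Sset j)) (span ℤ (e '' Ici j)) := by
  have h := (sThenE_linearIndependent j).isCompl_span_image (span_range_sThenE j)
    (isCompl_compl (x := Iio j))
  rwa [sThenE, (piecewise_eqOn (s := Iio j) s e).image_eq,
    (piecewise_eqOn_compl (s := Iio j) s e).image_eq, compl_Iio] at h

theorem Int.eq_zero_of_forall_factorial_dvd {a : ℤ} (N : ℕ) (h : ∀ m, N ≤ m → (m ! : ℤ) ∣ a) :
    a = 0 := by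
  refine Int.eq_zero_of_abs_lt_dvd (h (N + a.natAbs + 1) (by omega)) ?_
  rw [Int.abs_eq_natAbs]
  exact_mod_cast (by omega : a.natAbs < N + a.natAbs + 1).trans_le (self_le_factorial _)

theorem Module.Free.eq_zero_of_forall_factorial_dvd {G : Type*} [AddCommGroup G] [Module.Free ℤ G]
    {x : G} (h : ∀ m : ℕ, ∃ y : G, (m ! : ℤ) • y = x) : x = 0 := by
  let b := Module.Free.chooseBasis ℤ G
  refine b.repr.injective (Finsupp.ext fun i => ?_)
  rw [map_zero, Finsupp.zero_apply]
  refine Int.eq_zero_of_forall_factorial_dvd 0 fun m _ => ?_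
  obtain ⟨y, rfl⟩ := h m
  exact ⟨b.repr y i, by simp⟩

theorem e_zero_eq_sum_add (m : ℕ) :
    e 0 = ∑ i ∈ Finset.range m, (i ! : ℤ) • s i + (m ! : ℤ) • e m := by
  induction m with
  | zero => simp
  | succ m ih =>
    rw [Finset.sum_range_succ, ih, add_assoc, s, smul_sub, smul_smul, factorial_succ]
    push_cast
    rw [mul_comm ((m : ℤ) + 1), sub_add_cancel]

theorem span_eq_top_of_range_s_subset {q : Set (ℕ →₀ ℤ)}
    (hq : Aleph1Free ((ℕ →₀ ℤ) ⧸ AddSubgroup.closure q)) (hs : range s ⊆ q) : span ℤ q = ⊤ := by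
  set G := (ℕ →₀ ℤ) ⧸ AddSubgroup.closure q
  have : Countable G := Quotient.countable
  have : Module.Free ℤ (⊤ : AddSubgroup G) := hq ⊤ Subtype.countable
  have : Module.Free ℤ G := Module.Free.of_equiv AddSubgroup.topEquiv.toIntLinearEquiv
  have hmk : ∀ m, (QuotientAddGroup.mk (e 0) : G) = (m ! : ℤ) • QuotientAddGroup.mk (e m) := by
    intro m
    rw [← QuotientAddGroup.mk_zsmul, QuotientAddGroup.eq_iff_sub_mem, e_zero_eq_sum_add m,
      add_sub_cancel_right]
    exact sum_mem fun i _ => zsmul_mem (AddSubgroup.subset_closure (hs (mem_range_self i))) _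
  have h0 : (QuotientAddGroup.mk (e 0) : G) = 0 :=
    Module.Free.eq_zero_of_forall_factorial_dvd fun m => ⟨_, (hmk m).symm⟩
  rw [eq_top_iff, ← span_range_e, span_le]
  rintro _ ⟨m, rfl⟩
  have hm : (QuotientAddGroup.mk (e m) : G) = 0 :=
    (smul_eq_zero.mp ((hmk m).symm.trans h0)).resolve_left (by exact_mod_cast m.factorial_ne_zero)
  rwa [QuotientAddGroup.eq_zero_iff, ← span_int_eq_addSubgroupClosure] at hm

theorem Module.Basis.repr_eq_factorial {ι M : Type*} [AddCommGroup M] [Module ℤ M]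
    (b : Basis ι ℤ M) {v : ℕ → ι} (hv : Function.Injective v) {x : M} {y : ℕ → M}
    (h : ∀ m, x = ∑ i ∈ Finset.range m, (i ! : ℤ) • b (v i) + (m ! : ℤ) • y m) (i : ℕ) :
    b.repr x (v i) = i ! := by
  have hcoord : ∀ m, i < m → b.repr x (v i) = i ! + m ! * b.repr (y m) (v i) := by
    intro m hm
    rw [h m]
    simp only [map_add, map_sum, Finsupp.add_apply, Finsupp.finsetSum_apply]
    rw [Finset.sum_eq_single i]
    · simp
    · intro k _ hki
      simp [hv.ne hki]
    · simp [hm]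
  rw [← sub_eq_zero]
  exact Int.eq_zero_of_forall_factorial_dvd (i + 1) fun m hm =>
    ⟨b.repr (y m) (v i), by rw [hcoord m hm]; ring⟩

theorem range_s_not_subset_of_mem_Ppb {q : Set (ℕ →₀ ℤ)} (hq : q ∈ Ppb (ℕ →₀ ℤ)) :
    ¬ range s ⊆ q := by
  intro hs
  obtain ⟨hli, -, hfree⟩ := hq
  have hspan : ⊤ ≤ span ℤ (range ((↑) : q → ℕ →₀ ℤ)) := by
    rw [Subtype.range_coe, span_eq_top_of_range_s_subset hfree hs]
  let b := Module.Basis.mk hli hspan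
  let v : ℕ → q := fun i => ⟨s i, hs (mem_range_self i)⟩
  have hv : Injective v := fun i i' h => s_linearIndependent.injective (congrArg Subtype.val h)
  have hrepr := b.repr_eq_factorial hv (x := e 0) (y := e) fun m => by
    simpa [b, v] using e_zero_eq_sum_add m
  refine (infinite_range_of_injective hv).mono ?_ (b.repr (e 0)).support.finite_toSet
  rintro _ ⟨i, rfl⟩
  simp [hrepr i, Nat.factorial_ne_zero]

/-- For `H = ⊕_{n ∈ ℕ} ℤ`, the sets `S j` form a strictly descending
sequence in `(P_pb, ≤)` with no lower bound in `P_pb`; in particular `P_pb`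
is not ℵ₁-closed. -/
theorem Ppb_freeAbelian_not_aleph1_closed :
    (∀ j : ℕ, Sset j ∈ Ppb (ℕ →₀ ℤ)) ∧ (∀ j : ℕ, Sset j ⊂ Sset (j + 1)) ∧
      ¬ ∃ q ∈ Ppb (ℕ →₀ ℤ), ∀ j : ℕ, Sset j ⊆ q := by
  refine ⟨fun j => ⟨(s_linearIndependent.linearIndepOn (Iio j)).id_image,
    (to_countable _).image s, aleph1Free_finsupp_nat.quotient_of_isCompl (isCompl_span_Sset j)⟩,
    fun j => s_linearIndependent.injective.image_strictMono (Iio_ssubset_Iio j.lt_succ_self), ?_⟩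
  rintro ⟨q, hq, hsub⟩
  exact range_s_not_subset_of_mem_Ppb hq
    (range_subset_iff.mpr fun i => hsub (i + 1) ⟨i, i.lt_succ_self, rfl⟩)
end

section
/- Let H = ⊕_{n∈ℕ} ℤ with standard basis (e_n) and let S = {e_i − (i+1)e_{i+1} : i ∈ ℕ}. Then there is no countable linearly independent subset p of H with S ⊆ p such that H/⟨p⟩ is ℵ₁-free; that is, S has no lower bound in the poset (P_pb, ≤). -/
/-!
If `H/⟨p⟩` were ℵ₁-free it would, being countable, be free. There the images `ē i` of the basis
vectors satisfy `ē i = (i + 1) • ē (i + 1)`, so each `ē i` is divisible by every positive integer and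
hence `0`: `p` spans `H`, and is therefore a basis of `H` containing `S`. But
`e 0 = ∑_{i<n} i! • s i + n! • e n`, and the coordinates of `e n` at a fixed `s m` (for `n > m`)
again form such an infinitely divisible chain in `ℤ`, so they vanish and the coordinate of `e 0` at
`s m` is `m!`. Thus `e 0` would have infinitely many nonzero coordinates.
-/

open Nat

theorem Aleph1Free.free_of_countable {G : Type*} [AddCommGroup G] [Countable G]
    (hG : Aleph1Free G) : Module.Free ℤ G :=
  have : Module.Free ℤ (⊤ : AddSubgroup G) := hG ⊤ inferInstance
  .of_equiv AddSubgroup.topEquiv.toIntLinearEquiv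

theorem Int.eq_zero_of_forall_dvd {z : ℤ} (h : ∀ n : ℕ, 0 < n → (n : ℤ) ∣ z) : z = 0 :=
  Int.eq_zero_of_dvd_of_natAbs_lt_natAbs (h (z.natAbs + 1) z.natAbs.succ_pos) (by omega)

theorem Module.Free.eq_zero_of_forall_exists_eq_smul {M : Type*} [AddCommGroup M]
    [Module.Free ℤ M] {x : M} (h : ∀ n : ℕ, 0 < n → ∃ y : M, x = (n : ℤ) • y) : x = 0 := by
  let b := Module.Free.chooseBasis ℤ M
  suffices b.repr x = 0 by simpa using this
  ext i
  refine Int.eq_zero_of_forall_dvd fun n hn => ?_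
  obtain ⟨y, rfl⟩ := h n hn
  exact ⟨b.repr y i, by simp⟩

section Chain

variable {M : Type*} [AddCommGroup M] (v : ℕ → M)

theorem eq_ascFactorial_smul_of_chain (m k : ℕ)
    (hv : ∀ i, m ≤ i → i < m + k → v i = ((i : ℤ) + 1) • v (i + 1)) :
    v m = ((m + 1).ascFactorial k : ℤ) • v (m + k) := by
  induction k with
  | zero => simp
  | succ k ih =>
    rw [ih fun i hi hik => hv i hi (by omega), hv (m + k) (by omega) (by omega), smul_smul,
      ascFactorial_succ, ← add_assoc]
    push_cast
    ring_nf

theorem eq_zero_of_chain [Module.Free ℤ M] (m : ℕ)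
    (hv : ∀ i, m ≤ i → v i = ((i : ℤ) + 1) • v (i + 1)) : v m = 0 := by
  refine Module.Free.eq_zero_of_forall_exists_eq_smul fun n _ => ?_
  obtain ⟨c, hc⟩ : (n : ℤ) ∣ (m + 1).ascFactorial n :=
    Int.natCast_dvd_natCast.mpr ((dvd_factorial ‹_› le_rfl).trans (factorial_dvd_ascFactorial _ _))
  refine ⟨c • v (m + n), ?_⟩
  rw [eq_ascFactorial_smul_of_chain v m n fun i hi _ => hv i hi, hc, mul_smul]

theorem Module.Basis.repr_chain_apply {ι : Type*} (B : Module.Basis ι ℤ M) {j : ℕ → ι}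
    (hj : Function.Injective j) (hv : ∀ i, v i = B (j i) + ((i : ℤ) + 1) • v (i + 1)) (m : ℕ) :
    B.repr (v 0) (j m) = m ! := by
  classical
  set c : ℕ → ℤ := fun k => B.repr (v k) (j m)
  have hc : ∀ k, c k = (if k = m then 1 else 0) + ((k : ℤ) + 1) • c (k + 1) := fun k => by
    simp only [c, hv k, map_add, map_zsmul, B.repr_self, Finsupp.add_apply, Finsupp.smul_apply,
      Finsupp.single_apply, hj.eq_iff]
  have htail : c (m + 1) = 0 :=
    eq_zero_of_chain c (m + 1) fun i hi => by rw [hc i, if_neg (by omega), zero_add]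
  have hm : c m = 1 := by simpa [htail] using hc m
  have hhead := eq_ascFactorial_smul_of_chain c 0 m fun i _ hi => by
    rw [hc i, if_neg (by omega : i ≠ m), zero_add]
  simpa [one_ascFactorial, hm] using hhead

end Chain

theorem e_eq_s_add (i : ℕ) : e i = s i + ((i : ℤ) + 1) • e (i + 1) := by
  rw [s, sub_add_cancel]

theorem s_injective : Function.Injective s := by
  intro i j hij
  have := congrArg (· i) hij
  by_contra hne
  simp [s, e, Finsupp.single_apply, hne] at this
  omega

theorem span_eq_top_of_free_quotient {p : Set (ℕ →₀ ℤ)} (hsp : Set.range s ⊆ p)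
    [Module.Free ℤ ((ℕ →₀ ℤ) ⧸ AddSubgroup.closure p)] : Submodule.span ℤ p = ⊤ := by
  let π := QuotientAddGroup.mk' (AddSubgroup.closure p)
  have hs : ∀ k, π (s k) = 0 := fun k =>
    (QuotientAddGroup.eq_zero_iff _).mpr (AddSubgroup.subset_closure (hsp ⟨k, rfl⟩))
  have he : ∀ i, e i ∈ Submodule.span ℤ p := fun i => by
    rw [← Submodule.mem_toAddSubgroup, Submodule.span_int_eq_addSubgroupClosure,
      ← QuotientAddGroup.eq_zero_iff]
    refine eq_zero_of_chain (fun k => π (e k)) i fun k _ => ?_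
    simp only [e_eq_s_add k, map_add, map_zsmul, hs, zero_add]
  rw [eq_top_iff, ← Finsupp.basisSingleOne.span_eq, Submodule.span_le]
  rintro _ ⟨i, rfl⟩
  exact he i

/-- There is no countable linearly independent subset `p` of
`H = ⊕_{n ∈ ℕ} ℤ` with `S ⊆ p` and `H/⟨p⟩` ℵ₁-free; i.e., `S` has no lower bound
in the poset `(P_pb, ≤)`. -/
theorem no_lower_bound_for_S :
    ¬ ∃ p : Set (ℕ →₀ ℤ), p.Countable ∧
        LinearIndependent ℤ ((↑) : p → (ℕ →₀ ℤ)) ∧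
        Set.range s ⊆ p ∧
        Aleph1Free ((ℕ →₀ ℤ) ⧸ AddSubgroup.closure p) := by
  rintro ⟨p, -, hli, hsp, hfree⟩
  have : Countable ((ℕ →₀ ℤ) ⧸ AddSubgroup.closure p) := Quotient.countable
  have := hfree.free_of_countable
  let B := Module.Basis.mk hli (by rw [Subtype.range_coe, span_eq_top_of_free_quotient hsp])
  let j : ℕ → p := fun i => ⟨s i, hsp ⟨i, rfl⟩⟩
  have hj : Function.Injective j := fun a b h => s_injective (congrArg Subtype.val h)
  have hcoord := B.repr_chain_apply e hj fun i => by simp [B, j, e_eq_s_add i]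
  refine Set.infinite_range_of_injective hj ((B.repr (e 0)).support.finite_toSet.subset ?_)
  rintro _ ⟨m, rfl⟩
  simp [hcoord m, factorial_ne_zero]
end

section
/- Let H be an abelian group and K ⊆ L ⊆ H subgroups such that H/L is ℵ₁-free and L/K is a free abelian group. Then H/K is ℵ₁-free (transitivity of ℵ₁-freeness). -/
/-!
Let `S ≤ H ⧸ K` be countable. Its image in `H ⧸ L` is a countable subgroup of an ℵ₁-free group,
hence free, and by exactness of `0 → L ⧸ K → H ⧸ K → H ⧸ L → 0` the kernel of `S → H ⧸ L` is a
countable subgroup of the free group `L ⧸ K`. Countable submodules of free modules over a PID are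
free: they embed into `ℕ →₀ R`, and there, choosing for every `n` an element of `N` supported in
`{0, …, n}` whose `n`-th coordinate generates the ideal of all such coordinates gives a triangular
basis of `N`. Thus `S` is an extension of a free group by a free group, which splits.
-/

theorem Module.Free.of_exact {R A M P : Type*} [Ring R] [AddCommGroup A] [AddCommGroup M]
    [AddCommGroup P] [Module R A] [Module R M] [Module R P] [Module.Free R A] [Module.Free R P]
    {f : A →ₗ[R] M} {g : M →ₗ[R] P} (hfg : Function.Exact f g) (hf : Function.Injective f)
    (hg : Function.Surjective g) : Module.Free R M := by
  obtain ⟨l, hl⟩ := Module.projective_lifting_property g LinearMap.id hg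
  exact Module.Free.of_equiv (hfg.splitSurjectiveEquiv hf ⟨l, hl⟩).1.symm

namespace Finsupp

lemma mem_supported_Iio_of_mem_supported_Iic {α M R : Type*} [LinearOrder α] [Semiring R]
    [AddCommMonoid M] [Module R M] {n : α} {x : α →₀ M} (hx : x ∈ supported M R (Set.Iic n))
    (hxn : x n = 0) : x ∈ supported M R (Set.Iio n) := by
  rw [mem_supported'] at hx ⊢
  intro m hm
  rcases (not_lt.mp hm).eq_or_lt with rfl | hlt
  · exact hxn
  · exact hx m (not_le.mpr hlt)

variable {R : Type*} [CommRing R] [IsPrincipalIdealRing R] (N : Submodule R (ℕ →₀ R))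

open Submodule

noncomputable def leadingIdeal (n : ℕ) : Ideal R := (N ⊓ supported R R (Set.Iic n)).map (lapply n)

lemma exists_mem_lapply_eq_generator (n : ℕ) :
    ∃ y ∈ N ⊓ supported R R (Set.Iic n), y n = IsPrincipal.generator (leadingIdeal N n) :=
  mem_map.mp (IsPrincipal.generator_mem (leadingIdeal N n))

noncomputable def pivot (n : ℕ) : ℕ →₀ R := (exists_mem_lapply_eq_generator N n).choose

lemma pivot_mem (n : ℕ) : pivot N n ∈ N ⊓ supported R R (Set.Iic n) :=
  (exists_mem_lapply_eq_generator N n).choose_spec.1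

lemma pivot_apply_self (n : ℕ) : pivot N n n = IsPrincipal.generator (leadingIdeal N n) :=
  (exists_mem_lapply_eq_generator N n).choose_spec.2

lemma pivot_apply_of_lt {n m : ℕ} (h : n < m) : pivot N n m = 0 :=
  (mem_supported' R _).mp (pivot_mem N n).2 m (not_le.mpr h)

def pivotIndices : Set ℕ := {n | leadingIdeal N n ≠ ⊥}

lemma linearIndependent_pivot [IsDomain R] :
    LinearIndependent R (fun n : pivotIndices N => pivot N n) := by
  rw [linearIndependent_iff']
  intro s c hsum
  classical
  induction s using Finset.induction_on_max with
  | empty => simp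
  | insert a s hmax ih =>
    have has : a ∉ s := fun h => lt_irrefl a (hmax a h)
    rw [Finset.sum_insert has] at hsum
    -- `a` is the largest index, so only `pivot a` has a nonzero `a`-th coordinate
    have hca : c a = 0 := by
      have h := congrArg (fun x => x (a : ℕ)) hsum
      simp only [add_apply, coe_finsetSum, Finset.sum_apply, smul_apply, pivot_apply_self,
        smul_eq_mul, coe_zero, Pi.zero_apply] at h
      rw [Finset.sum_eq_zero fun b hb => by rw [pivot_apply_of_lt N (hmax b hb), mul_zero],
        add_zero] at h
      exact (mul_eq_zero.mp h).resolve_right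
        ((IsPrincipal.eq_bot_iff_generator_eq_zero _).not.mp a.2)
    rw [hca, zero_smul, zero_add] at hsum
    intro i hi
    rcases Finset.mem_insert.mp hi with rfl | hi
    · exact hca
    · exact ih hsum i hi

lemma exists_sub_smul_pivot_mem {n : ℕ} {x : ℕ →₀ R} (hx : x ∈ N ⊓ supported R R (Set.Iic n)) :
    ∃ c : R, x - c • pivot N n ∈ N ⊓ supported R R (Set.Iio n) := by
  obtain ⟨c, hc⟩ := (IsPrincipal.mem_iff_eq_smul_generator (leadingIdeal N n)).mp
    (mem_map_of_mem (f := lapply n) hx)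
  refine ⟨c, N.sub_mem hx.1 (N.smul_mem c (pivot_mem N n).1),
    mem_supported_Iio_of_mem_supported_Iic (sub_mem hx.2 (smul_mem _ c (pivot_mem N n).2)) ?_⟩
  simp only [coe_sub, coe_smul, Pi.sub_apply, Pi.smul_apply, pivot_apply_self]
  exact sub_eq_zero.mpr hc

lemma mem_span_pivot (n : ℕ) {x : ℕ →₀ R} (hx : x ∈ N ⊓ supported R R (Set.Iio n)) :
    x ∈ span R (Set.range fun n : pivotIndices N => pivot N n) := by
  induction n generalizing x with
  | zero => simp [show x = 0 by simpa using hx.2]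
  | succ n ih =>
    rw [Set.Iio_add_one_eq_Iic] at hx
    have hpivot : pivot N n ∈ span R (Set.range fun n : pivotIndices N => pivot N n) := by
      by_cases hn : n ∈ pivotIndices N
      · exact subset_span ⟨⟨n, hn⟩, rfl⟩
      · refine ih ⟨(pivot_mem N n).1, mem_supported_Iio_of_mem_supported_Iic (pivot_mem N n).2 ?_⟩
        rw [pivot_apply_self, ← IsPrincipal.eq_bot_iff_generator_eq_zero]
        exact not_not.mp hn
    obtain ⟨c, hc⟩ := exists_sub_smul_pivot_mem N hx
    simpa using add_mem (ih hc) (smul_mem _ c hpivot)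

lemma span_pivot : span R (Set.range fun n : pivotIndices N => pivot N n) = N := by
  refine le_antisymm (span_le.mpr (Set.range_subset_iff.mpr fun n => (pivot_mem N n).1))
    fun x hx => mem_span_pivot N (x.support.sup id + 1) ⟨hx, ?_⟩
  exact (mem_supported R x).mpr fun a ha => Nat.lt_succ_of_le (Finset.le_sup (f := id) ha)

theorem free_submodule_nat_s10 [IsDomain R] : Module.Free R N :=
  .of_basis ((Module.Basis.span (linearIndependent_pivot N)).map
    (LinearEquiv.ofEq _ _ (span_pivot N)))

end Finsupp

theorem Module.Free.of_injective_of_countable {R M N : Type*} [CommRing R] [IsDomain R]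
    [IsPrincipalIdealRing R] [AddCommGroup M] [Module R M] [Module.Free R M] [AddCommGroup N]
    [Module R N] [Countable N] (f : N →ₗ[R] M) (hf : Function.Injective f) : Module.Free R N := by
  let b := Module.Free.chooseBasis R M
  set s : Set (Module.Free.ChooseBasisIndex R M) := ⋃ x : N, ↑(b.repr (f x)).support
  have hsupp (x : N) : ↑(b.repr (f x)).support ⊆ s := fun i hi => Set.mem_iUnion.mpr ⟨x, hi⟩
  obtain ⟨e, he⟩ := Set.countable_iff_exists_injOn.mp
    (Set.countable_iUnion fun x : N => (b.repr (f x)).support.countable_toSet)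
  let φ : N →ₗ[R] ℕ →₀ R := Finsupp.lmapDomain R R e ∘ₗ b.repr.toLinearMap ∘ₗ f
  have hφ : Function.Injective φ := fun x y hxy =>
    hf (b.repr.injective (Finsupp.mapDomain_injOn s he (hsupp x) (hsupp y) hxy))
  have := Finsupp.free_submodule_nat_s10 (LinearMap.range φ)
  exact Module.Free.of_equiv (LinearEquiv.ofInjective φ hφ).symm

theorem aleph1Free_of_free {G : Type*} [AddCommGroup G] [Module.Free ℤ G] : Aleph1Free G :=
  fun T _ => .of_injective_of_countable T.subtype.toIntLinearMap Subtype.val_injective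

theorem Aleph1Free.of_exact {A B C : Type*} [AddCommGroup A] [AddCommGroup B] [AddCommGroup C]
    {f : A →+ B} {g : B →+ C} (hfg : Function.Exact f g) (hf : Function.Injective f)
    (hA : Aleph1Free A) (hC : Aleph1Free C) : Aleph1Free B := by
  intro S hS
  let f' := f.addSubgroupComap S
  have hf' : Function.Injective f' := fun a b h => Subtype.ext (hf (congrArg Subtype.val h))
  have : Module.Free ℤ (S.comap f) := hA _ (Function.Injective.countable hf')
  have : Module.Free ℤ (S.map g) := hC _ (g.addSubgroupMap_surjective S).countable
  refine Module.Free.of_exact (f := f'.toIntLinearMap) (g := (g.addSubgroupMap S).toIntLinearMap)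
    ?_ hf' (g.addSubgroupMap_surjective S)
  intro x
  constructor
  · intro hx
    obtain ⟨a, ha⟩ := (hfg x).mp (congrArg Subtype.val hx)
    exact ⟨⟨a, show f a ∈ S from ha ▸ x.2⟩, Subtype.ext ha⟩
  · rintro ⟨a, rfl⟩
    exact Subtype.ext (hfg.apply_apply_eq_zero a)

namespace QuotientAddGroup

variable {H : Type*} [AddCommGroup H] (K L : AddSubgroup H)

lemma injective_map_subtype : Function.Injective
    (map (K.addSubgroupOf L) K L.subtype fun _ hx => hx) := by
  refine (injective_iff_map_eq_zero _).mpr fun a ha => ?_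
  induction a using QuotientAddGroup.induction_on with
  | H x => exact (eq_zero_iff x).mpr (AddSubgroup.mem_addSubgroupOf.mpr ((eq_zero_iff _).mp ha))

lemma exact_map_subtype_map_id (hKL : K ≤ L) : Function.Exact
    (map (K.addSubgroupOf L) K L.subtype fun _ hx => hx) (map K L (.id H) hKL) := by
  intro x
  induction x using QuotientAddGroup.induction_on with
  | H x =>
    refine (eq_zero_iff x).trans ⟨fun hx => ⟨(⟨x, hx⟩ : L), rfl⟩, ?_⟩
    rintro ⟨y, hy⟩
    induction y using QuotientAddGroup.induction_on with
    | H y =>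
      have hyx : -(y : H) + x ∈ K := QuotientAddGroup.eq.mp hy
      simpa using L.add_mem y.2 (hKL hyx)

end QuotientAddGroup

/-- If `K ⊆ L ⊆ H`, `H/L` is ℵ₁-free and `L/K` is free,
then `H/K` is ℵ₁-free (transitivity of ℵ₁-freeness). -/
theorem aleph1Free_transitivity {H : Type*} [AddCommGroup H]
    (K L : AddSubgroup H) (hKL : K ≤ L)
    (hHL : Aleph1Free (H ⧸ L))
    (hLK : Module.Free ℤ (L ⧸ K.addSubgroupOf L)) :
    Aleph1Free (H ⧸ K) :=
  .of_exact (QuotientAddGroup.exact_map_subtype_map_id K L hKL)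
    (QuotientAddGroup.injective_map_subtype K L) (@aleph1Free_of_free _ _ hLK) hHL
end

section
/- Let H be an ℵ₁-free abelian group of cardinality ℵ₁. For every x ∈ H, the set D_x = {p ∈ P_pb : x ∈ ⟨p⟩} is dense in the poset (P_pb, ≤): for every q ∈ P_pb there exists p ∈ P_pb with q ⊆ p and x ∈ ⟨p⟩. Moreover, p can be chosen so that p − q is finite. -/
/-!
Write `G = H ⧸ ⟨q⟩`, an ℵ₁-free group. Unless `x ∈ ⟨q⟩`, the pure closure of `x̄` in `G` is
countable, hence free, so `x̄ = k • ȳ` with `ȳ` indivisible. For countable `K ≤ G ⧸ ℤȳ` the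
preimage `B ≤ G` is countable, hence free, and indivisibility of `ȳ` in `B` yields a functional
`F` on `B` with `F ȳ = 1`; so `ℤȳ` is a direct summand of `B` and `K ≅ B ⧸ ℤȳ ≅ ker F` is free.
Thus `G ⧸ ℤȳ ≅ H ⧸ ⟨q ∪ {z}⟩` is ℵ₁-free for any lift `z` of `ȳ`, and `p = q ∪ {z}` works.
-/

open AddSubgroup QuotientAddGroup

theorem Module.Dual.isCompl_span_singleton_ker {R M : Type*} [CommRing R] [AddCommGroup M]
    [Module R M] {F : Module.Dual R M} {y : M} (hFy : F y = 1) :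
    IsCompl (R ∙ y) (LinearMap.ker F) := by
  let proj : M →ₗ[R] R ∙ y := F.smulRight ⟨y, Submodule.mem_span_singleton_self y⟩
  have hproj : ∀ v : R ∙ y, proj v = v := by
    rintro ⟨_, hv⟩
    obtain ⟨r, rfl⟩ := Submodule.mem_span_singleton.1 hv
    ext
    simp [proj, hFy]
  have hker : LinearMap.ker proj = LinearMap.ker F := by
    ext v
    simp only [LinearMap.mem_ker, proj, LinearMap.smulRight_apply]
    exact ⟨fun h => by simpa [hFy] using congrArg (F ∘ Subtype.val) h, fun h => by simp [h]⟩
  exact hker ▸ LinearMap.isCompl_of_proj hproj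

theorem Module.Free.exists_zsmul_eq_and_dual_apply_eq_one {M : Type*} [AddCommGroup M]
    [Module.Free ℤ M] {x : M} (hx : x ≠ 0) :
    ∃ (d : ℤ) (x' : M) (F : Module.Dual ℤ M), d • x' = x ∧ F x' = 1 := by
  classical
  let b := Module.Free.chooseBasis ℤ M
  -- `d` generates the ideal of values `F x`, so it divides every coordinate of `x`.
  obtain ⟨d, hd⟩ := Submodule.IsPrincipal.principal (LinearMap.range (Module.Dual.eval ℤ M x))
  obtain ⟨F, hFd⟩ : ∃ F : Module.Dual ℤ M, F x = d :=
    LinearMap.mem_range.1 (hd ▸ Submodule.mem_span_singleton_self d)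
  have hdvd : ∀ i, d ∣ b.repr x i := fun i =>
    Ideal.mem_span_singleton.1 <| by
      rw [Ideal.span, ← hd]
      exact LinearMap.mem_range_self _ (b.coord i)
  have hd0 : d ≠ 0 := by
    rintro rfl
    exact hx (b.forall_coord_eq_zero_iff.1 fun i => zero_dvd_iff.1 (hdvd i))
  let x' := b.repr.symm ((b.repr x).mapRange (· / d) (Int.zero_ediv d))
  have hdx' : d • x' = x := by
    apply b.repr.injective
    ext i
    simp [x', Int.mul_ediv_cancel' (hdvd i)]
  refine ⟨d, x', F, hdx', mul_left_cancel₀ hd0 ?_⟩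
  rw [← smul_eq_mul, ← map_zsmul, hdx', hFd, mul_one]

section AddCommGroup
variable {G : Type*} [AddCommGroup G]

open scoped Pointwise in
theorem QuotientAddGroup.countable_comap_mk' {N : AddSubgroup G} [Countable N]
    (K : AddSubgroup (G ⧸ N)) [Countable K] : Countable (K.comap (mk' N)) := by
  have hK : (K.comap (mk' N) : Set G) = Quotient.out '' (K : Set (G ⧸ N)) + (N : Set G) := by
    rw [← preimage_image_mk_eq_add, Set.image_image]
    simp
  rw [← SetLike.coe_sort_coe, hK, Set.countable_coe_iff, ← Set.image2_add]
  exact ((Set.to_countable _).image _).image2 (Set.to_countable _) _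

def IsIndivisible (y : G) : Prop :=
  ∀ (n : ℤ) (z : G), n • z = y → IsUnit n

theorem IsIndivisible.ne_zero {y : G} (hy : IsIndivisible y) : y ≠ 0 := fun h =>
  not_isUnit_zero (hy 0 0 (by rw [zero_smul, h]))

def pureClosure (x : G) : AddSubgroup G where
  carrier := {g | ∃ n : ℤ, n ≠ 0 ∧ n • g ∈ zmultiples x}
  zero_mem' := ⟨1, one_ne_zero, by simp⟩
  add_mem' := by
    rintro a b ⟨m, hm, ha⟩ ⟨n, hn, hb⟩
    refine ⟨m * n, mul_ne_zero hm hn, ?_⟩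
    rw [smul_add, mul_comm m n, mul_smul n m a, mul_comm n m, mul_smul m n b]
    exact add_mem (zsmul_mem ha n) (zsmul_mem hb m)
  neg_mem' := by
    rintro a ⟨n, hn, ha⟩
    exact ⟨n, hn, by rw [smul_neg]; exact neg_mem ha⟩

theorem countable_pureClosure [Module.IsTorsionFree ℤ G] (x : G) : Countable (pureClosure x) := by
  have hcoef : ∀ g : pureClosure x, ∃ c : ℤ × ℤ, c.1 ≠ 0 ∧ c.1 • (g : G) = c.2 • x := by
    rintro ⟨g, n, hn, m, hm⟩
    exact ⟨(n, m), hn, hm.symm⟩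
  choose c hc0 hc using hcoef
  refine Function.Injective.countable (f := c) fun g₁ g₂ h => Subtype.ext ?_
  exact smul_right_injective G (hc0 g₁)
    (show (c g₁).1 • (g₁ : G) = (c g₁).1 • (g₂ : G) by rw [hc, h, ← hc])

theorem Aleph1Free.free_of_injective (hG : Aleph1Free G) {M : Type*} [AddCommGroup M]
    [Countable M] (f : M →+ G) (hf : Function.Injective f) : Module.Free ℤ M :=
  have := (AddMonoidHom.ofInjective hf).symm.injective.countable
  have := hG f.range this
  Module.Free.of_equiv (AddMonoidHom.ofInjective hf).symm.toIntLinearEquiv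

theorem Aleph1Free.of_addEquiv {G' : Type*} [AddCommGroup G'] (hG : Aleph1Free G)
    (e : G ≃+ G') : Aleph1Free G' := fun K _ =>
  hG.free_of_injective ((e.symm : G' →+ G).comp K.subtype)
    (e.symm.injective.comp Subtype.val_injective)

theorem Aleph1Free.isTorsionFree (hG : Aleph1Free G) : Module.IsTorsionFree ℤ G := by
  refine Module.isTorsionFree_int_iff_isAddTorsionFree.2 ⟨fun n hn x y hxy => ?_⟩
  have := hG (zmultiples (x - y)) inferInstance
  have h : (n : ℤ) • (⟨x - y, mem_zmultiples _⟩ : zmultiples (x - y)) = 0 :=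
    Subtype.ext (by simpa [smul_sub, sub_eq_zero] using hxy)
  obtain h | h := smul_eq_zero.1 h
  · exact absurd (Int.ofNat_eq_zero.1 h) hn
  · exact sub_eq_zero.1 (congrArg Subtype.val h)

theorem Aleph1Free.exists_zsmul_eq_isIndivisible (hG : Aleph1Free G) {x : G} (hx : x ≠ 0) :
    ∃ (k : ℤ) (y : G), k • y = x ∧ IsIndivisible y := by
  have := hG.isTorsionFree
  have := hG _ (countable_pureClosure x)
  have hxP : x ∈ pureClosure x := ⟨1, one_ne_zero, by simp⟩
  obtain ⟨d, y, F, hdy, hFy⟩ := Module.Free.exists_zsmul_eq_and_dual_apply_eq_one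
    (x := (⟨x, hxP⟩ : pureClosure x)) (by simpa using hx)
  have hdy' : d • (y : G) = x := congrArg Subtype.val hdy
  refine ⟨d, y, hdy', fun n z hnz => ?_⟩
  -- `z` lies in the pure closure, where `n * F z = F y = 1`.
  have hz : z ∈ pureClosure x := by
    refine ⟨d * n, mul_ne_zero ?_ ?_, ?_⟩
    · rintro rfl
      exact hx (by rw [← hdy', zero_smul])
    · rintro rfl
      have hy : y = 0 := Subtype.ext (by rw [← hnz, zero_smul]; rfl)
      simp [hy] at hFy
    · rw [mul_smul, hnz, hdy']
      exact mem_zmultiples x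
  refine IsUnit.of_mul_eq_one (F ⟨z, hz⟩) ?_
  rw [← smul_eq_mul, ← map_zsmul]
  convert hFy
  exact Subtype.ext hnz

theorem self_mem_comap_mk'_zmultiples (y : G) (K : AddSubgroup (G ⧸ zmultiples y)) :
    y ∈ K.comap (mk' (zmultiples y)) := by
  rw [mem_comap, mk'_apply, (eq_zero_iff y).2 (mem_zmultiples y)]
  exact K.zero_mem

noncomputable def comapMk'QuotientEquiv (y : G) (K : AddSubgroup (G ⧸ zmultiples y)) :
    (K.comap (mk' (zmultiples y)) ⧸
      (ℤ ∙ (⟨y, self_mem_comap_mk'_zmultiples y K⟩ : K.comap (mk' (zmultiples y))))) ≃ₗ[ℤ] K :=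
  let B := K.comap (mk' (zmultiples y))
  let φ : B →ₗ[ℤ] K :=
    (((mk' (zmultiples y)).comp B.subtype).codRestrict K fun b => b.2).toIntLinearMap
  have hker : LinearMap.ker φ = ℤ ∙ (⟨y, self_mem_comap_mk'_zmultiples y K⟩ : B) := by
    ext b
    rw [LinearMap.mem_ker, Submodule.mem_span_singleton, Subtype.ext_iff]
    change ((b : G) : G ⧸ zmultiples y) = 0 ↔ _
    rw [eq_zero_iff, mem_zmultiples_iff]
    simp only [Subtype.ext_iff, AddSubgroup.coe_zsmul]
  Submodule.quotEquivOfEq _ _ hker.symm ≪≫ₗ φ.quotKerEquivOfSurjective fun k =>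
    ⟨⟨(k : G ⧸ zmultiples y).out, by rw [mem_comap, mk'_apply, out_eq']; exact k.2⟩,
      Subtype.ext (out_eq' _)⟩

theorem Aleph1Free.quotient_zmultiples (hG : Aleph1Free G) {y : G} (hy : IsIndivisible y) :
    Aleph1Free (G ⧸ zmultiples y) := by
  intro K _
  let B := K.comap (mk' (zmultiples y))
  have hyB := self_mem_comap_mk'_zmultiples y K
  have : Countable B := countable_comap_mk' K
  have := hG B this
  obtain ⟨d, y', F, hdy, hFy⟩ := Module.Free.exists_zsmul_eq_and_dual_apply_eq_one
    (x := (⟨y, hyB⟩ : B)) (by simpa using hy.ne_zero)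
  have hd : IsUnit d := hy d y' (congrArg Subtype.val hdy)
  have hdFy : (d • F) ⟨y, hyB⟩ = 1 := by
    rw [← hdy, LinearMap.smul_apply, map_zsmul, hFy, smul_eq_mul, smul_eq_mul, mul_one,
      Int.isUnit_mul_self hd]
  have := hG.free_of_injective (B.subtype.comp (LinearMap.ker (d • F)).subtype.toAddMonoidHom)
    (Subtype.val_injective.comp Subtype.val_injective)
  exact Module.Free.of_equiv ((comapMk'QuotientEquiv y K).symm ≪≫ₗ
    Submodule.quotientEquivOfIsCompl _ _ (Module.Dual.isCompl_span_singleton_ker hdFy)).symm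

end AddCommGroup

theorem map_mk'_closure_insert {H : Type*} [AddCommGroup H] (s : Set H) (z : H) :
    (closure (insert z s)).map (mk' (closure s)) = zmultiples (z : H ⧸ closure s) := by
  rw [Set.insert_eq, AddSubgroup.closure_union, AddSubgroup.map_sup, ← zmultiples_eq_closure,
    AddMonoidHom.map_zmultiples, map_mk'_self, sup_bot_eq]
  rfl

theorem insert_mem_Ppb {H : Type*} [AddCommGroup H] {q : Set H} (hq : q ∈ Ppb H) {z : H}
    (hz : IsIndivisible (z : H ⧸ closure q)) : insert z q ∈ Ppb H := by
  obtain ⟨hli, hcount, hfree⟩ := hq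
  have := hfree.isTorsionFree
  refine ⟨LinearIndepOn.id_insert' hli fun r hr => ?_, hcount.insert z, ?_⟩
  · have : r • (z : H ⧸ closure q) = 0 := by
      rw [← mk_zsmul, eq_zero_iff, ← Submodule.span_int_eq_addSubgroupClosure]
      exact hr
    exact (smul_eq_zero.1 this).resolve_right hz.ne_zero
  · exact (hfree.quotient_zmultiples hz).of_addEquiv <|
      (quotientAddEquivOfEq (map_mk'_closure_insert q z)).symm.trans
        (quotientQuotientEquivQuotient _ _ (closure_mono (Set.subset_insert z q)))

theorem Dx_dense_general {H : Type*} [AddCommGroup H] (x : H) :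
    ∀ q ∈ Ppb H, ∃ p ∈ Ppb H, q ⊆ p ∧ x ∈ AddSubgroup.closure p ∧ (p \ q).Finite := by
  intro q hq
  by_cases hx : (x : H ⧸ closure q) = 0
  · exact ⟨q, hq, subset_rfl, (eq_zero_iff x).1 hx, by simp⟩
  obtain ⟨k, y, hky, hy⟩ := hq.2.2.exists_zsmul_eq_isIndivisible hx
  obtain ⟨z, rfl⟩ := mk_surjective y
  refine ⟨insert z q, insert_mem_Ppb hq hy, Set.subset_insert z q, ?_,
    (Set.finite_singleton z).subset (by simp +contextual)⟩
  have hxz : x - k • z ∈ closure q := by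
    rw [← eq_zero_iff, mk_sub, mk_zsmul, hky, sub_self]
  simpa using add_mem (closure_mono (Set.subset_insert z q) hxz)
    (zsmul_mem (subset_closure (Set.mem_insert z q)) k)

/-- For every `x ∈ H`, the set `D_x = {p ∈ P_pb : x ∈ ⟨p⟩}` is dense in
`(P_pb, ≤)`; moreover the extension `p` of `q` can be chosen with `p \ q` finite. -/
theorem Dx_dense {H : Type*} [AddCommGroup H]
    (hH : Aleph1Free H) (hcard : Cardinal.mk H = Cardinal.aleph 1) (x : H) :
    ∀ q ∈ Ppb H, ∃ p ∈ Ppb H, q ⊆ p ∧ x ∈ AddSubgroup.closure p ∧ (p \ q).Finite :=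
  Dx_dense_general x
end

section
/- Let H be an ℵ₁-free abelian group of cardinality ℵ₁. Then there exists a sequence (e_i)_{i∈ℕ} of elements of H such that for every j ∈ ℕ the finite set q_j = {e_0, e_1, …, e_j} is linearly independent over ℤ, the subgroup ⟨q_j⟩ is pure in H, and H/⟨q_j⟩ is ℵ₁-free; in particular, (q_j)_{j∈ℕ} is a strictly descending sequence in the poset (P_pb, ≤). -/
/-- A subgroup `K` of `H` is pure if whenever `n • h ∈ K` with `n ≠ 0`, already `h ∈ K`. -/
def IsPureSubgroup {H : Type*} [AddCommGroup H] (K : AddSubgroup H) : Prop :=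
  ∀ n : ℤ, n ≠ 0 → ∀ h : H, n • h ∈ K → h ∈ K

/-!
`H` is uncountable and torsion-free, so a maximal independent subset of `H` (whose purification
is all of `H`) is infinite. The purification `P` of a countably infinite independent set is a
countable pure subgroup, hence free of infinite rank; `e` enumerates infinitely many vectors of a
basis of `P`. Basis vectors span pure subgroups of `P`, hence of `H`.
For a countable `Q ≤ H ⧸ K` with `K = ⟨e 0, …, e j⟩`, the preimage `L` of `Q` is countable, hence
free, and `K` is a finitely generated pure subgroup of `L`. Such a subgroup is a direct summand:
it lies in the summand `A` of `L` spanned by finitely many basis vectors, and `A ⧸ K` is finitely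
generated and torsion-free, hence free. So `Q ≅ L ⧸ K` is isomorphic to a countable subgroup of
`H`, and is free.
-/

open Submodule

section Complements

variable {R M : Type*} [CommRing R] [AddCommGroup M] [Module R M]

theorem Submodule.exists_fg_isCompl_le [Module.Free R M] {N : Submodule R M} (hN : N.FG) :
    ∃ A B : Submodule R M, IsCompl A B ∧ N ≤ A ∧ A.FG := by
  classical
  obtain ⟨t, rfl⟩ := hN
  let c := Module.Free.chooseBasis R M
  let s : Set (Module.Free.ChooseBasisIndex R M) := ⋃ x ∈ t, ↑(c.repr x).support
  refine ⟨span R (c '' s), span R (c '' sᶜ),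
    c.linearIndependent.isCompl_span_image c.span_eq isCompl_compl, ?_, ?_⟩
  · exact span_le.2 fun x hx => c.mem_span_image.2 fun i hi => Set.mem_iUnion₂.2 ⟨x, hx, hi⟩
  · exact fg_span ((t.finite_toSet.biUnion fun x _ => (c.repr x).support.finite_toSet).image c)

theorem Submodule.exists_isCompl_of_isCompl_of_le {A B N : Submodule R M} (hAB : IsCompl A B)
    (hNA : N ≤ A) {C₀ : Submodule R A} (hC₀ : IsCompl (N.comap A.subtype) C₀) :
    ∃ C : Submodule R M, IsCompl N C := by
  let r : M →ₗ[R] N :=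
    ((A.subtype ∘ₗ (N.comap A.subtype).subtype).codRestrict N fun x => x.2) ∘ₗ
      (N.comap A.subtype).projectionOnto C₀ hC₀ ∘ₗ A.projectionOnto B hAB
  refine ⟨LinearMap.ker r, LinearMap.isCompl_of_proj fun x => ?_⟩
  have hA : A.projectionOnto B hAB x = ⟨x, hNA x.2⟩ := projectionOnto_apply_left hAB ⟨x, hNA x.2⟩
  have hN := projectionOnto_apply_left hC₀ ⟨⟨x, hNA x.2⟩, x.2⟩
  simp only [r, LinearMap.comp_apply, hA]
  rw [hN]
  rfl

theorem Submodule.exists_isCompl_of_smul_mem [IsDomain R] [IsPrincipalIdealRing R]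
    [Module.Finite R M] (N : Submodule R M) (hN : ∀ r : R, r ≠ 0 → ∀ x : M, r • x ∈ N → x ∈ N) :
    ∃ C : Submodule R M, IsCompl N C := by
  have : Module.IsTorsionFree R (M ⧸ N) := by
    refine Module.isTorsionFree_iff_smul_eq_zero.2 fun r x hrx => or_iff_not_imp_left.2 fun hr => ?_
    obtain ⟨x, rfl⟩ := N.mkQ_surjective x
    rw [← map_smul, mkQ_apply, Quotient.mk_eq_zero] at hrx
    rw [mkQ_apply, Quotient.mk_eq_zero]
    exact hN r hr x hrx
  obtain ⟨σ, hσ⟩ := N.mkQ.exists_rightInverse_of_surjective N.range_mkQ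
  have hρ : ∀ x, x - σ (N.mkQ x) ∈ N := fun x => by
    rw [← Quotient.mk_eq_zero, ← mkQ_apply, map_sub, ← LinearMap.comp_apply, hσ,
      LinearMap.id_apply, sub_self]
  let ρ : M →ₗ[R] N := (LinearMap.id - σ ∘ₗ N.mkQ).codRestrict N hρ
  refine ⟨LinearMap.ker ρ, LinearMap.isCompl_of_proj fun x => Subtype.ext ?_⟩
  simp [ρ, (Quotient.mk_eq_zero N).2 x.2]

theorem Submodule.exists_isCompl_of_fg_of_smul_mem [IsDomain R] [IsPrincipalIdealRing R]
    [Module.Free R M] {N : Submodule R M} (hfg : N.FG)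
    (hN : ∀ r : R, r ≠ 0 → ∀ x : M, r • x ∈ N → x ∈ N) :
    ∃ C : Submodule R M, IsCompl N C := by
  obtain ⟨A, B, hAB, hNA, hA⟩ := exists_fg_isCompl_le hfg
  have : Module.Finite R A := Module.Finite.iff_fg.2 hA
  obtain ⟨C₀, hC₀⟩ := (N.comap A.subtype).exists_isCompl_of_smul_mem fun r hr x hx => hN r hr x hx
  exact exists_isCompl_of_isCompl_of_le hAB hNA hC₀

end Complements

namespace AddSubgroup

variable {H : Type*} [AddCommGroup H]

theorem countable_closure {s : Set H} (hs : s.Countable) : Countable (closure s) := by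
  have := hs.to_subtype
  have : Countable (span ℤ (Set.range ((↑) : s → H))) := inferInstance
  rw [Subtype.range_coe] at this
  rwa [← span_int_eq_addSubgroupClosure]

theorem FG.addSubgroupOf {K L : AddSubgroup H} (hK : K.FG) (hKL : K ≤ L) :
    (K.addSubgroupOf L).FG := by
  rw [← AddGroup.fg_iff_addSubgroup_fg] at hK ⊢
  exact AddGroup.fg_of_surjective (f := (addSubgroupOfEquivOfLe hKL).symm.toAddMonoidHom)
    (AddEquiv.surjective _)

theorem countable_comap_mk' {K : AddSubgroup H} [Countable K] (Q : AddSubgroup (H ⧸ K))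
    [Countable Q] : Countable (Q.comap (QuotientAddGroup.mk' K)) := by
  refine Set.countable_coe_iff.2 ((Set.countable_range fun p : Q × K =>
    (p.1 : H ⧸ K).out + p.2).mono fun x hx => ?_)
  have hx' : -(x : H ⧸ K).out + x ∈ K := QuotientAddGroup.eq.1 (QuotientAddGroup.out_eq' _)
  exact ⟨(⟨x, hx⟩, ⟨_, hx'⟩), add_neg_cancel_left _ _⟩

def purification (K : AddSubgroup H) : AddSubgroup H where
  carrier := {h | ∃ n : ℤ, n ≠ 0 ∧ n • h ∈ K}
  zero_mem' := ⟨1, one_ne_zero, by simp⟩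
  add_mem' := by
    rintro a b ⟨n, hn, ha⟩ ⟨m, hm, hb⟩
    refine ⟨n * m, mul_ne_zero hn hm, ?_⟩
    rw [smul_add, mul_comm, mul_smul, mul_comm, mul_smul]
    exact K.add_mem (K.zsmul_mem ha m) (K.zsmul_mem hb n)
  neg_mem' := by
    rintro a ⟨n, hn, ha⟩
    exact ⟨n, hn, by simpa using K.neg_mem ha⟩

theorem le_purification (K : AddSubgroup H) : K ≤ K.purification :=
  fun h hh => ⟨1, one_ne_zero, by simpa using hh⟩

theorem isPureSubgroup_purification (K : AddSubgroup H) : IsPureSubgroup K.purification := by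
  rintro n hn h ⟨m, hm, hmn⟩
  exact ⟨m * n, mul_ne_zero hm hn, by rwa [mul_smul]⟩

theorem countable_purification [Module.IsTorsionFree ℤ H] (K : AddSubgroup H) [Countable K] :
    Countable K.purification := by
  choose n hn hnK using fun h : K.purification => h.2
  refine Function.Injective.countable (f := fun h => (n h, (⟨n h • (h : H), hnK h⟩ : K)))
    fun h h' hhh' => Subtype.ext ?_
  simp only [Prod.mk.injEq, Subtype.mk.injEq] at hhh'
  rw [hhh'.1] at hhh'
  exact smul_right_injective H (hn h') hhh'.2

end AddSubgroup

theorem Module.Basis.isPureSubgroup_closure_image {ι H : Type*} [AddCommGroup H]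
    (b : Basis ι ℤ H) (s : Set ι) : IsPureSubgroup (AddSubgroup.closure (b '' s)) := by
  intro n hn x hx
  rw [← span_int_eq_addSubgroupClosure, Submodule.mem_toAddSubgroup, b.mem_span_image] at hx ⊢
  rwa [map_smul, Finsupp.support_smul_eq hn] at hx

theorem IsPureSubgroup.map_subtype {H : Type*} [AddCommGroup H] {P : AddSubgroup H}
    (hP : IsPureSubgroup P) {K : AddSubgroup P} (hK : IsPureSubgroup K) :
    IsPureSubgroup (K.map P.subtype) := by
  rintro n hn h ⟨k, hk, hkh⟩
  have hhP : h ∈ P := hP n hn h (hkh ▸ k.2)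
  refine ⟨⟨h, hhP⟩, hK n hn _ ?_, rfl⟩
  have : n • (⟨h, hhP⟩ : P) = k := Subtype.ext hkh.symm
  rwa [this]

namespace Aleph1Free

variable {H : Type*} [AddCommGroup H]

theorem isTorsionFree_s14 (hH : Aleph1Free H) : Module.IsTorsionFree ℤ H := by
  refine Module.isTorsionFree_iff_smul_eq_zero.2 fun n x hnx => ?_
  let K := AddSubgroup.zmultiples x
  have := hH K inferInstance
  have h : n • (⟨x, AddSubgroup.mem_zmultiples x⟩ : K) = 0 := Subtype.ext hnx
  simpa using h

theorem free_of_injective_s14 (hH : Aleph1Free H) {A : Type*} [AddCommGroup A] [Countable A]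
    {f : A →+ H} (hf : Function.Injective f) : Module.Free ℤ A :=
  have := hH f.range (f.rangeRestrict_surjective.countable)
  Module.Free.of_equiv (AddMonoidHom.ofInjective hf).symm.toIntLinearEquiv

theorem exists_linearIndependent_nat (hH : Aleph1Free H) (hunc : ¬ Countable H) :
    ∃ f : ℕ → H, LinearIndependent ℤ f := by
  have := hH.isTorsionFree_s14
  obtain ⟨B, hB, hmax⟩ := exists_maximal_linearIndepOn ℤ (id : H → H)
  have hBinf : B.Infinite := by
    intro hfin
    have := AddSubgroup.countable_closure hfin.countable
    have := (AddSubgroup.closure B).countable_purification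
    refine hunc (Set.countable_univ_iff.1 ((Set.countable_coe_iff.1 this).mono fun x _ => ?_))
    by_cases hx : x ∈ B
    · exact AddSubgroup.le_purification _ (AddSubgroup.subset_closure hx)
    · obtain ⟨n, hn, hnx⟩ := hmax x hx
      rw [Set.image_id, ← Submodule.mem_toAddSubgroup, span_int_eq_addSubgroupClosure] at hnx
      exact ⟨n, hn, hnx⟩
  exact ⟨(↑) ∘ hBinf.natEmbedding B, hB.comp _ (hBinf.natEmbedding B).injective⟩

theorem exists_linearIndependent_isPureSubgroup (hH : Aleph1Free H) (hunc : ¬ Countable H) :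
    ∃ e : ℕ → H, LinearIndependent ℤ e ∧ ∀ s, IsPureSubgroup (AddSubgroup.closure (e '' s)) := by
  have := hH.isTorsionFree_s14
  obtain ⟨f, hf⟩ := hH.exists_linearIndependent_nat hunc
  let P := (AddSubgroup.closure (Set.range f)).purification
  have := AddSubgroup.countable_closure (Set.countable_range f)
  have := hH P (AddSubgroup.countable_purification _)
  let b := Module.Free.chooseBasis ℤ P
  have : Infinite (Module.Free.ChooseBasisIndex ℤ P) := by
    rw [← Cardinal.aleph0_le_mk_iff, ← Module.Free.rank_eq_card_chooseBasisIndex]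
    refine LinearIndependent.aleph0_le_rank (v := fun n => (⟨f n, ?_⟩ : P))
      (.of_comp P.subtype.toIntLinearMap hf)
    exact AddSubgroup.le_purification _ (AddSubgroup.subset_closure (Set.mem_range_self n))
  let ι := Infinite.natEmbedding (Module.Free.ChooseBasisIndex ℤ P)
  refine ⟨fun n => b (ι n), ?_, fun s => ?_⟩
  · exact (b.linearIndependent.comp ι ι.injective).map' P.subtype.toIntLinearMap
      (LinearMap.ker_eq_bot.2 Subtype.val_injective)
  · have hs : AddSubgroup.closure ((fun n => (b (ι n) : H)) '' s) =
        (AddSubgroup.closure (b '' (ι '' s))).map P.subtype := by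
      rw [AddMonoidHom.map_closure, Set.image_image, Set.image_image]
      rfl
    rw [hs]
    exact (AddSubgroup.isPureSubgroup_purification _).map_subtype
      (b.isPureSubgroup_closure_image _)

theorem free_quotient (hH : Aleph1Free H) {L : AddSubgroup H} [Countable L]
    {N : Submodule ℤ L} (hfg : N.FG) (hN : IsPureSubgroup N.toAddSubgroup) :
    Module.Free ℤ (L ⧸ N) := by
  have := hH L inferInstance
  obtain ⟨C, hC⟩ := exists_isCompl_of_fg_of_smul_mem hfg hN
  have : Module.Free ℤ C := hH.free_of_injective_s14 (f := L.subtype.comp C.toAddSubgroup.subtype)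
    (Subtype.val_injective.comp Subtype.val_injective)
  exact Module.Free.of_equiv (quotientEquivOfIsCompl N C hC).symm

theorem quotient (hH : Aleph1Free H) {K : AddSubgroup H} (hfg : K.FG) (hK : IsPureSubgroup K) :
    Aleph1Free (H ⧸ K) := by
  intro Q hQ
  have : Countable K := by
    obtain ⟨T, rfl⟩ := hfg
    exact AddSubgroup.countable_closure T.countable_toSet
  let L := Q.comap (QuotientAddGroup.mk' K)
  have := AddSubgroup.countable_comap_mk' Q
  have hKL : K ≤ L := fun x hx => by
    change (x : H ⧸ K) ∈ Q
    rw [(QuotientAddGroup.eq_zero_iff x).2 hx]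
    exact Q.zero_mem
  let ψ : L →ₗ[ℤ] Q :=
    (((QuotientAddGroup.mk' K).comp L.subtype).codRestrict Q fun x => x.2).toIntLinearMap
  have hψ : Function.Surjective ψ := by
    rintro ⟨q, hq⟩
    obtain ⟨x, rfl⟩ := QuotientAddGroup.mk_surjective q
    exact ⟨⟨x, hq⟩, rfl⟩
  have hker : (LinearMap.ker ψ).toAddSubgroup = K.addSubgroupOf L := by
    ext x
    exact Subtype.ext_iff.trans (QuotientAddGroup.eq_zero_iff _)
  have hfg' : (LinearMap.ker ψ).FG := by
    rw [fg_iff_addSubgroup_fg, hker]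
    exact hfg.addSubgroupOf hKL
  have := hH.free_quotient hfg' (hker ▸ fun n hn x hx => hK n hn x hx)
  exact Module.Free.of_equiv (ψ.quotKerEquivOfSurjective hψ)

end Aleph1Free

/-- In every ℵ₁-free group `H` of cardinality ℵ₁, there is a sequence
`(e i)` such that each finite set `q j = {e 0, …, e j}` is linearly independent with
`⟨q j⟩` pure in `H` and `H/⟨q j⟩` ℵ₁-free; the `q j` form a strictly descending
sequence in `(P_pb, ≤)`. -/
theorem strict_descending_chain_in_Ppb {H : Type*} [AddCommGroup H]
    (hH : Aleph1Free H) (hcard : Cardinal.mk H = Cardinal.aleph 1) :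
    ∃ e : ℕ → H,
      (∀ j : ℕ,
        LinearIndependent ℤ ((↑) : (e '' Set.Iic j : Set H) → H) ∧
        IsPureSubgroup (AddSubgroup.closure (e '' Set.Iic j)) ∧
        Aleph1Free (H ⧸ AddSubgroup.closure (e '' Set.Iic j))) ∧
      (∀ j : ℕ, (e '' Set.Iic j : Set H) ⊂ e '' Set.Iic (j + 1)) := by
  have hunc : ¬ Countable H := by
    rw [← Cardinal.mk_le_aleph0_iff, hcard, not_le]
    exact Cardinal.aleph0_lt_aleph_one
  obtain ⟨e, he, hpure⟩ := hH.exists_linearIndependent_isPureSubgroup hunc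
  refine ⟨e, fun j => ⟨(he.linearIndepOn _).id_image, hpure _, hH.quotient ?_ (hpure _)⟩,
    fun j => he.injective.image_strictMono (Set.Iic_ssubset_Iic.2 j.lt_succ_self)⟩
  exact ⟨((Set.finite_Iic j).image e).toFinset, by simp⟩
end
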